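/- arXiv:1805.03451 — 12 statements merged into one kernel-verified Lean document; each statement's English description precedes it below -/
import Mathlib

section
/- Every affine image of a Frank-and-Wolfe set is a Frank-and-Wolfe set. -/
open Pointwise

noncomputable section

/-- A quadratic function on a real vector space. -/
def IsQuadratic {E : Type*} [AddCommGroup E] [Module ℝ E] (f : E → ℝ) : Prop :=
  ∃ (B : E →ₗ[ℝ] E →ₗ[ℝ] ℝ) (l : E →ₗ[ℝ] ℝ) (c : ℝ), ∀ x, f x = B x x + l x + c

/-- A Frank-and-Wolfe set: every quadratic function bounded below on `F`
attains its infimum on `F`. -/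
def IsFWSet {E : Type*} [AddCommGroup E] [Module ℝ E] (F : Set E) : Prop :=
  ∀ f : E → ℝ, IsQuadratic f → BddBelow (f '' F) →
    ∃ x₀ ∈ F, ∀ x ∈ F, f x₀ ≤ f x

theorem affine_image_FW {n m : ℕ} (F : Set (EuclideanSpace ℝ (Fin n)))
    (T : EuclideanSpace ℝ (Fin n) →ᵃ[ℝ] EuclideanSpace ℝ (Fin m))
    (hF : IsFWSet F) : IsFWSet (T '' F) := by
  intro f hf hbdd
  obtain ⟨B, l, c, hB⟩ := hf
  set L := T.linear with hL
  set v := T 0 with hv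
  have hT : ∀ x, T x = L x + v := by
    intro x
    have := T.map_vadd 0 x
    simpa [vadd_eq_add, add_comm] using this
  have hquad : IsQuadratic (f ∘ T) := by
    refine ⟨B.compl₁₂ L L, ((B.flip v).comp L) + ((B v).comp L) + (l.comp L),
      B v v + l v + c, ?_⟩
    intro x
    simp only [Function.comp_apply, hT x, hB, LinearMap.compl₁₂_apply,
      LinearMap.add_apply, LinearMap.comp_apply, LinearMap.flip_apply,
      map_add, LinearMap.add_apply]
    ring
  have himg : (f ∘ T) '' F = f '' (T '' F) := by
    rw [Set.image_comp]
  obtain ⟨x₀, hx₀, hmin⟩ := hF (f ∘ T) hquad (himg ▸ hbdd)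
  exact ⟨T x₀, ⟨x₀, hx₀, rfl⟩, by rintro y ⟨x, hx, rfl⟩; exact hmin x hx⟩
end
end

section
/- A Frank-and-Wolfe set has no flat asymptotes: if M is an affine subspace with dist(F, M) = 0, then F ∩ M ≠ ∅. -/
open Pointwise

noncomputable section

/-! The squared distance to `M` is the squared norm of the affine map `x ↦ x - proj_M x`, hence a
quadratic function; it is nonnegative and its infimum over `F` is `0` because `dist(F, M) = 0`.
A FW-set attains this infimum, at a point of `F` at distance `0` from `M`, i.e. a point of `M`. -/

open Metric EuclideanGeometry

theorem isQuadratic_norm_sq_affineMap {E F : Type*} [AddCommGroup E] [Module ℝ E]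
    [NormedAddCommGroup F] [InnerProductSpace ℝ F] (A : E →ᵃ[ℝ] F) :
    IsQuadratic fun x => ‖A x‖ ^ 2 := by
  refine ⟨(innerₗ F ∘ₗ A.linear).compl₂ A.linear, 2 • innerₗ F (A 0) ∘ₗ A.linear, ‖A 0‖ ^ 2,
    fun x => ?_⟩
  have hA : A x = A.linear x + A 0 :=
    eq_add_of_sub_eq (by simpa using (A.linearMap_vsub x 0).symm)
  simp only [hA, LinearMap.compl₂_apply, LinearMap.comp_apply, LinearMap.smul_apply,
    innerₗ_apply_apply, norm_add_sq_real, real_inner_self_eq_norm_sq, nsmul_eq_mul,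
    real_inner_comm (A 0)]
  push_cast
  ring

theorem isQuadratic_infDist_sq {E : Type*} [NormedAddCommGroup E] [InnerProductSpace ℝ E]
    (s : AffineSubspace ℝ E) [Nonempty s] [s.direction.HasOrthogonalProjection] :
    IsQuadratic fun x => infDist x (s : Set E) ^ 2 := by
  convert isQuadratic_norm_sq_affineMap
    (AffineMap.id ℝ E - s.subtype.comp (orthogonalProjection s).toAffineMap) using 3 with x
  rw [← dist_orthogonalProjection_eq_infDist, dist_eq_norm]
  rfl

theorem isGLB_image_of_forall_lt {α : Type*} {s : Set α} {f : α → ℝ} {m : ℝ}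
    (hle : ∀ x ∈ s, m ≤ f x) (hlt : ∀ ε > m, ∃ x ∈ s, f x < ε) : IsGLB (f '' s) m := by
  refine ⟨Set.forall_mem_image.2 hle, fun b hb => not_lt.1 fun hmb => ?_⟩
  obtain ⟨x, hx, hxb⟩ := hlt b hmb
  exact (hb (Set.mem_image_of_mem f hx)).not_gt hxb

theorem IsFWSet.exists_eq_of_isGLB {E : Type*} [AddCommGroup E] [Module ℝ E] {F : Set E}
    (hF : IsFWSet F) {f : E → ℝ} (hf : IsQuadratic f) {m : ℝ} (hm : IsGLB (f '' F) m) :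
    ∃ x ∈ F, f x = m := by
  obtain ⟨x, hx, hmin⟩ := hF f hf hm.bddBelow
  exact ⟨x, hx, le_antisymm (hm.2 (Set.forall_mem_image.2 hmin))
    (hm.1 (Set.mem_image_of_mem f hx))⟩

theorem FW_no_f_asymptote {n : ℕ} (F : Set (EuclideanSpace ℝ (Fin n)))
    (hF : IsFWSet F) (M : AffineSubspace ℝ (EuclideanSpace ℝ (Fin n)))
    (hdist : ∀ ε : ℝ, 0 < ε → ∃ x ∈ F, ∃ y ∈ (M : Set (EuclideanSpace ℝ (Fin n))), dist x y < ε) :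
    (F ∩ (M : Set (EuclideanSpace ℝ (Fin n)))).Nonempty := by
  obtain ⟨-, -, p, hp, -⟩ := hdist 1 one_pos
  have : Nonempty M := ⟨⟨p, hp⟩⟩
  have hinf : IsGLB ((fun x => infDist x M ^ 2) '' F) 0 := by
    refine isGLB_image_of_forall_lt (fun x _ => by positivity) fun ε hε => ?_
    obtain ⟨x, hx, y, hy, hxy⟩ := hdist √ε (Real.sqrt_pos.2 hε)
    refine ⟨x, hx, ?_⟩
    calc infDist x M ^ 2 ≤ dist x y ^ 2 := by
          gcongr
          exacts [infDist_nonneg, infDist_le_dist_of_mem hy]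
      _ < √ε ^ 2 := by gcongr
      _ = ε := Real.sq_sqrt hε.le
  obtain ⟨x, hx, hx0⟩ := hF.exists_eq_of_isGLB (isQuadratic_infDist_sq M) hinf
  refine ⟨x, hx, dist_orthogonalProjection_eq_zero_iff.1 ?_⟩
  rwa [dist_orthogonalProjection_eq_infDist, ← sq_eq_zero_iff]
end
end

section
/- If F ⊆ ℝⁿ is a Frank-and-Wolfe set, then F × ℝ is a Frank-and-Wolfe set in ℝⁿ × ℝ. -/
open Pointwise

noncomputable section

private lemma quad_coeff_nonneg {a p r b : ℝ} (h : ∀ t, b ≤ a * t ^ 2 + p * t + r) :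
    0 ≤ a := by
  by_contra hc
  push_neg at hc
  have hr : b ≤ r := by nlinarith [h 0]
  have hnn : 0 ≤ (r - b) / (-a) + 1 := by
    have : 0 ≤ (r - b) / (-a) := div_nonneg (by linarith) (by linarith)
    linarith
  set s := Real.sqrt ((r - b) / (-a) + 1) with hs
  have hsq : s ^ 2 = (r - b) / (-a) + 1 := Real.sq_sqrt hnn
  have hprod : (-a) * s ^ 2 = (r - b) + (-a) := by
    rw [hsq]
    have hcancel : (r - b) / (-a) * (-a) = r - b :=
      div_mul_cancel₀ _ (by linarith : (-a) ≠ 0)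
    linear_combination hcancel
  nlinarith [h s, h (-s)]

private lemma linear_coeff_zero {p r b : ℝ} (h : ∀ t, b ≤ p * t + r) : p = 0 := by
  by_contra hp
  have h1 := h ((b - r - 1) / p)
  have h2 : p * ((b - r - 1) / p) = b - r - 1 := by field_simp
  linarith

private lemma quad_min {a p r : ℝ} (ha : 0 < a) (t : ℝ) :
    r - p ^ 2 / (4 * a) ≤ a * t ^ 2 + p * t + r := by
  have h1 : 0 ≤ (p + 2 * a * t) ^ 2 / (4 * a) := by positivity
  have h2 : (p + 2 * a * t) ^ 2 / (4 * a) = p ^ 2 / (4 * a) + p * t + a * t ^ 2 := by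
    field_simp
    ring
  linarith

theorem FW_prod_real {n : ℕ} (F : Set (EuclideanSpace ℝ (Fin n)))
    (hF : IsFWSet F) : IsFWSet (F ×ˢ (Set.univ : Set ℝ)) := by
  classical
  intro f hf hbdd
  obtain ⟨B, l, c, hq⟩ := hf
  obtain ⟨b, hb⟩ := hbdd
  have hlb : ∀ x ∈ F, ∀ t : ℝ, b ≤ f (x, t) := by
    intro x hx t
    exact hb ⟨(x, t), ⟨hx, trivial⟩, rfl⟩
  have hne : F.Nonempty := by
    obtain ⟨x, hx, -⟩ := hF (fun _ => 0) ⟨0, 0, 0, by simp⟩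
      ⟨0, by rintro y ⟨z, -, rfl⟩; exact le_refl 0⟩
    exact ⟨x, hx⟩
  set j : EuclideanSpace ℝ (Fin n) →ₗ[ℝ] (EuclideanSpace ℝ (Fin n)) × ℝ :=
    LinearMap.inl ℝ _ ℝ with hj
  set e : (EuclideanSpace ℝ (Fin n)) × ℝ := (0, 1) with he
  set a : ℝ := B e e with ha
  set m : ℝ := l e with hm
  set M : EuclideanSpace ℝ (Fin n) →ₗ[ℝ] ℝ := ((B.flip e).comp j) + ((B e).comp j) with hM
  set g : EuclideanSpace ℝ (Fin n) → ℝ := fun x => B (j x) (j x) + l (j x) + c with hg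
  have key : ∀ (x : EuclideanSpace ℝ (Fin n)) (t : ℝ),
      f (x, t) = a * t ^ 2 + (M x + m) * t + g x := by
    intro x t
    have hxt : ((x, t) : (EuclideanSpace ℝ (Fin n)) × ℝ) = j x + t • e := by
      simp [hj, he, Prod.ext_iff]
    rw [hq, hxt]
    simp only [hM, ha, hm, hg, map_add, map_smul, LinearMap.add_apply,
      LinearMap.smul_apply, LinearMap.comp_apply, LinearMap.flip_apply, smul_eq_mul]
    ring
  have ha0 : 0 ≤ a := by
    obtain ⟨x, hx⟩ := hne
    exact quad_coeff_nonneg (fun t => by rw [← key x t]; exact hlb x hx t)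
  have hgq : IsQuadratic g :=
    ⟨B.compl₁₂ j j, l.comp j, c, fun x => by
      simp [hg, LinearMap.compl₁₂_apply]⟩
  rcases eq_or_lt_of_le ha0 with haz | hap
  · -- a = 0
    have hMz : ∀ x ∈ F, M x + m = 0 := by
      intro x hx
      refine linear_coeff_zero (p := M x + m) (r := g x) (b := b) (fun t => ?_)
      have h1 := hlb x hx t
      rw [key x t, ← haz] at h1
      nlinarith [h1]
    have hfx : ∀ x ∈ F, ∀ t, f (x, t) = g x := by
      intro x hx t
      rw [key x t, hMz x hx, ← haz]
      ring
    have hbdd' : BddBelow (g '' F) := by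
      refine ⟨b, ?_⟩
      rintro y ⟨x, hx, rfl⟩
      have := hlb x hx 0
      rwa [hfx x hx 0] at this
    obtain ⟨x₀, hx₀, hmin⟩ := hF g hgq hbdd'
    refine ⟨(x₀, 0), ⟨hx₀, trivial⟩, ?_⟩
    rintro ⟨x, t⟩ ⟨hx, -⟩
    rw [hfx x₀ hx₀ 0, hfx x hx t]
    exact hmin x hx
  · -- a > 0
    have haz : a ≠ 0 := ne_of_gt hap
    set h : EuclideanSpace ℝ (Fin n) → ℝ := fun x => g x - (M x + m) ^ 2 / (4 * a) with hh
    have hhq : IsQuadratic h := by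
      refine ⟨B.compl₁₂ j j - (4 * a)⁻¹ • ((LinearMap.mul ℝ ℝ).compl₁₂ M M),
        l.comp j - (m / (2 * a)) • M, c - m ^ 2 / (4 * a), fun x => ?_⟩
      simp only [hh, hg, LinearMap.sub_apply, LinearMap.compl₁₂_apply,
        LinearMap.smul_apply, LinearMap.mul_apply', LinearMap.comp_apply, smul_eq_mul]
      field_simp
      ring
    have key2 : ∀ (x : EuclideanSpace ℝ (Fin n)) (t : ℝ), h x ≤ f (x, t) := by
      intro x t
      rw [key x t, hh]
      exact quad_min hap t
    have key3 : ∀ x : EuclideanSpace ℝ (Fin n), h x = f (x, -(M x + m) / (2 * a)) := by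
      intro x
      rw [key x (-(M x + m) / (2 * a)), hh]
      field_simp
      ring
    have hbdd' : BddBelow (h '' F) := by
      refine ⟨b, ?_⟩
      rintro y ⟨x, hx, rfl⟩
      rw [key3 x]
      exact hlb x hx _
    obtain ⟨x₀, hx₀, hmin⟩ := hF h hhq hbdd'
    refine ⟨(x₀, -(M x₀ + m) / (2 * a)), ⟨hx₀, trivial⟩, ?_⟩
    rintro ⟨x, t⟩ ⟨hx, -⟩
    calc f (x₀, -(M x₀ + m) / (2 * a)) = h x₀ := (key3 x₀).symm
      _ ≤ h x := hmin x hx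
      _ ≤ f (x, t) := key2 x t
end
end

section
/- The Minkowski sum of a Frank-and-Wolfe set and a linear subspace is a Frank-and-Wolfe set. -/
open Pointwise

noncomputable section

lemma quad_eval {E : Type*} [AddCommGroup E] [Module ℝ E]
    (B : E →ₗ[ℝ] E →ₗ[ℝ] ℝ) (l : E →ₗ[ℝ] ℝ) (c : ℝ) (x v : E) (t : ℝ) :
    B (x + t • v) (x + t • v) + l (x + t • v) + c =
      (B x x + l x + c) + t * (B x v + B v x + l v) + t ^ 2 * (B v v) := by
  simp only [map_add, map_smul, LinearMap.add_apply, LinearMap.smul_apply, smul_eq_mul]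
  ring

lemma FW_add_span_singleton {E : Type*} [AddCommGroup E] [Module ℝ E]
    (F : Set E) (v : E) (hF : IsFWSet F) : IsFWSet (F + ((ℝ ∙ v : Submodule ℝ E) : Set E)) := by
  intro f hfq hbdd
  obtain ⟨B, l, c, hf⟩ := hfq
  -- F is nonempty
  obtain ⟨xb, hxb, -⟩ := hF 0 ⟨0, 0, 0, by simp⟩
    ⟨0, by rintro y ⟨x, hx, rfl⟩; simp⟩
  obtain ⟨C, hC⟩ := hbdd
  set a : ℝ := B v v with ha_def
  set b : E → ℝ := fun x => B x v + B v x + l v with hb_def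
  have hmem : ∀ x ∈ F, ∀ t : ℝ, x + t • v ∈ F + ((ℝ ∙ v : Submodule ℝ E) : Set E) := by
    intro x hx t
    exact Set.add_mem_add hx (Submodule.mem_span_singleton.mpr ⟨t, rfl⟩)
  have heval : ∀ x : E, ∀ t : ℝ, f (x + t • v) = f x + t * b x + t ^ 2 * a := by
    intro x t
    rw [hf, hf, quad_eval]
  have key : ∀ x ∈ F, ∀ t : ℝ, C ≤ f x + t * b x + t ^ 2 * a := by
    intro x hx t
    rw [← heval]
    exact hC ⟨x + t • v, hmem x hx t, rfl⟩
  rcases lt_trichotomy a 0 with ha | ha | ha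
  · -- a < 0 : contradiction with boundedness below
    exfalso
    set d : ℝ := f xb
    set bb : ℝ := b xb
    set t : ℝ := max ((|bb| + |d - C| + 1) / (-a)) 1 with ht_def
    have ht1 : (1 : ℝ) ≤ t := le_max_right _ _
    have ht2 : (|bb| + |d - C| + 1) / (-a) ≤ t := le_max_left _ _
    have hna : (0 : ℝ) < -a := by linarith
    have ht3 : |bb| + |d - C| + 1 ≤ (-a) * t := by
      rw [div_le_iff₀ hna] at ht2; linarith [ht2]
    have hk := key xb hxb t
    have h1 : a * t + |bb| ≤ -(|d - C| + 1) := by nlinarith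
    have h2 : t * bb + t ^ 2 * a ≤ t * (a * t + |bb|) := by
      nlinarith [le_abs_self bb, neg_abs_le bb]
    have h3 : t * (a * t + |bb|) ≤ a * t + |bb| := by
      nlinarith [mul_nonneg (by linarith : (0:ℝ) ≤ t - 1) (by nlinarith [abs_nonneg (d - C)] : (0:ℝ) ≤ -(a * t + |bb|))]
    have h4 : d - C ≤ |d - C| := le_abs_self _
    linarith
  · -- a = 0 : linear term must vanish on F, reduce to F
    have hb0 : ∀ x ∈ F, b x = 0 := by
      intro x hx
      by_contra hne
      have hk := key x hx ((C - f x - 1) / b x)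
      rw [div_mul_cancel₀ _ hne, ha] at hk
      nlinarith
    have hbF : BddBelow (f '' F) := by
      refine ⟨C, ?_⟩
      rintro y ⟨x, hx, rfl⟩
      have := key x hx 0
      simpa using this
    obtain ⟨x₀, hx₀, hmin⟩ := hF f ⟨B, l, c, hf⟩ hbF
    refine ⟨x₀, ?_, ?_⟩
    · have := hmem x₀ hx₀ 0
      simpa using this
    · rintro z hz
      rw [Set.mem_add] at hz
      obtain ⟨x, hx, m, hm, rfl⟩ := hz
      obtain ⟨t, rfl⟩ := Submodule.mem_span_singleton.mp hm
      rw [heval, hb0 x hx, ha]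
      have := hmin x hx
      linarith
  · -- a > 0 : complete the square
    set g : E → ℝ := fun x => f x - (b x) ^ 2 / (4 * a) with hg_def
    have hane : a ≠ 0 := ne_of_gt ha
    have hgq : IsQuadratic g := by
      set β : E →ₗ[ℝ] ℝ := B.flip v + B v with hβ_def
      have hβ : ∀ x, β x = B x v + B v x := by
        intro x; simp [hβ_def]
      refine ⟨B - ((4 * a)⁻¹) • (β.smulRight β), l - ((l v) / (2 * a)) • β,
        c - (l v) ^ 2 / (4 * a), ?_⟩
      intro x
      simp only [hg_def, hf, LinearMap.sub_apply, LinearMap.smul_apply,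
        LinearMap.smulRight_apply, smul_eq_mul]
      have hbx : b x = β x + l v := by simp [hb_def, hβ]
      rw [hbx]
      field_simp
      ring
    have hglef : ∀ x : E, ∀ t : ℝ, g x ≤ f (x + t • v) := by
      intro x t
      rw [heval]
      show f x - (b x) ^ 2 / (4 * a) ≤ f x + t * b x + t ^ 2 * a
      have h4a : (0:ℝ) < 4 * a := by linarith
      have hd : -(t * b x + t ^ 2 * a) ≤ (b x) ^ 2 / (4 * a) := by
        rw [le_div_iff₀ h4a]
        nlinarith [sq_nonneg (2 * a * t + b x)]
      linarith
    have hgval : ∀ x : E, g x = f (x + (-(b x) / (2 * a)) • v) := by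
      intro x
      rw [heval]
      show f x - (b x) ^ 2 / (4 * a) = _
      field_simp
      ring
    have hgbdd : BddBelow (g '' F) := by
      refine ⟨C, ?_⟩
      rintro y ⟨x, hx, rfl⟩
      rw [hgval]
      exact hC ⟨_, hmem x hx _, rfl⟩
    obtain ⟨x₀, hx₀, hmin⟩ := hF g hgq hgbdd
    refine ⟨x₀ + (-(b x₀) / (2 * a)) • v, hmem x₀ hx₀ _, ?_⟩
    rintro z hz
    rw [Set.mem_add] at hz
    obtain ⟨x, hx, m, hm, rfl⟩ := hz
    obtain ⟨t, rfl⟩ := Submodule.mem_span_singleton.mp hm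
    calc f (x₀ + (-(b x₀) / (2 * a)) • v) = g x₀ := (hgval x₀).symm
      _ ≤ g x := hmin x hx
      _ ≤ f (x + t • v) := hglef x t

lemma FW_add_span_finset {E : Type*} [AddCommGroup E] [Module ℝ E]
    (s : Finset E) : ∀ F : Set E, IsFWSet F →
    IsFWSet (F + ((Submodule.span ℝ (s : Set E) : Submodule ℝ E) : Set E)) := by
  classical
  induction s using Finset.induction with
  | empty =>
    intro F hF
    simpa [Submodule.span_empty, Submodule.bot_coe, Set.add_singleton] using hF
  | @insert a s _ ih =>
    intro F hF
    have hsp : (Submodule.span ℝ ((insert a s : Finset E) : Set E) : Submodule ℝ E)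
        = Submodule.span ℝ (s : Set E) ⊔ (ℝ ∙ a) := by
      rw [Finset.coe_insert, Submodule.span_insert]
      exact sup_comm _ _
    rw [hsp, Submodule.coe_sup, ← add_assoc]
    exact FW_add_span_singleton _ a (ih F hF)

theorem FW_add_subspace {n : ℕ} (F : Set (EuclideanSpace ℝ (Fin n)))
    (M : Submodule ℝ (EuclideanSpace ℝ (Fin n)))
    (hF : IsFWSet F) : IsFWSet (F + (M : Set (EuclideanSpace ℝ (Fin n)))) := by
  obtain ⟨s, hs⟩ := (IsNoetherian.noetherian M : M.FG)
  rw [← hs]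
  exact FW_add_span_finset s F hF
end
end

section
/- If T is an affine operator whose range contains the Frank-and-Wolfe set F, then T⁻¹(F) is a Frank-and-Wolfe set. -/
open Pointwise

noncomputable section

/-!
Fix a quadratic `f` bounded below on `T⁻¹(F)` and let `K = ker T`. On each fibre `x + K` over a
point of `F`, `f` is a quadratic bounded below, so its Hessian along `K` is positive semidefinite
and its differential along `K` vanishes on the kernel of that Hessian, i.e. lies in its range.
Solving the first-order condition with one fixed linear right inverse of the Hessian gives a
minimiser of `f` on the fibre that depends affinely on the base point. Composed with an affine
section of `T`, this yields an affine map `Φ` with `T ∘ Φ = id` on `F` such that `f ∘ Φ` is the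
fibrewise minimum of `f`; being quadratic and bounded below on `F`, it attains its infimum there.
-/

open Set

theorem nonneg_of_bddBelow_quadratic {a b c : ℝ}
    (h : BddBelow (range fun t : ℝ => a * t ^ 2 + b * t + c)) : 0 ≤ a := by
  obtain ⟨m, hm⟩ := h
  have hbound (t : ℝ) : m ≤ a * t ^ 2 + b * t + c := hm ⟨t, rfl⟩
  by_contra! ha
  have hcm : m ≤ c := by simpa using hbound 0
  set t := (c - m + 1) / -a + 1
  have hat : a * t = -(c - m + 1) + a := by
    simp only [t]; field_simp [ha.ne]
  have ht : 1 ≤ t := le_add_of_nonneg_left (div_nonneg (by linarith) (by linarith))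
  -- averaging the bounds at `t` and `-t` gives `m ≤ a * t ^ 2 + c ≤ a * t + c < m`
  nlinarith [hbound t, hbound (-t)]

theorem eq_zero_of_bddBelow_linear {b c : ℝ}
    (h : BddBelow (range fun t : ℝ => b * t + c)) : b = 0 := by
  obtain ⟨m, hm⟩ := h
  by_contra hb
  have := hm ⟨(m - c - 1) / b, rfl⟩
  simp only [mul_div_cancel₀ _ hb] at this
  linarith

namespace LinearMap

variable {K V V' : Type*} [Field K] [AddCommGroup V] [Module K V] [AddCommGroup V'] [Module K V']

theorem exists_rightInverseOn_range (f : V →ₗ[K] V') :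
    ∃ g : V' →ₗ[K] V, ∀ w ∈ range f, f (g w) = w := by
  obtain ⟨s, hs⟩ := f.rangeRestrict.exists_rightInverse_of_surjective f.range_rangeRestrict
  obtain ⟨g, hg⟩ := s.exists_extend
  refine ⟨g, fun w hw => ?_⟩
  have hgs : g w = s ⟨w, hw⟩ := congr($hg ⟨w, hw⟩)
  simpa [hgs] using congr(($hs ⟨w, hw⟩ : V'))

end LinearMap

namespace AffineMap

variable {K V V' : Type*} [Field K] [AddCommGroup V] [Module K V] [AddCommGroup V'] [Module K V']

theorem exists_rightInverseOn_range (T : V →ᵃ[K] V') :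
    ∃ σ : V' →ᵃ[K] V, ∀ y ∈ range T, T (σ y) = y := by
  obtain ⟨g, hg⟩ := T.linear.exists_rightInverseOn_range
  refine ⟨g.toAffineMap + const K V' (-g (T 0)), ?_⟩
  have hT (x : V) : T x = T.linear x + T 0 := congrFun T.decomp x
  rintro _ ⟨x, rfl⟩
  have hx : T x - T 0 ∈ LinearMap.range T.linear := ⟨x, by rw [hT x, add_sub_cancel_right]⟩
  rw [coe_add, Pi.add_apply, LinearMap.coe_toAffineMap, const_apply, ← sub_eq_add_neg, ← map_sub,
    hT, hg _ hx, sub_add_cancel]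

theorem apply_add_of_mem_ker (T : V →ᵃ[K] V') (x : V) {k : V}
    (hk : k ∈ LinearMap.ker T.linear) : T (x + k) = T x := by
  rw [add_comm, ← vadd_eq_add, T.map_vadd, LinearMap.mem_ker.1 hk, zero_vadd]

theorem sub_mem_ker_of_apply_eq (T : V →ᵃ[K] V') {x z : V} (h : T x = T z) :
    x - z ∈ LinearMap.ker T.linear := by
  rw [LinearMap.mem_ker, ← vsub_eq_sub, T.linearMap_vsub, vsub_eq_sub, h, sub_self]

end AffineMap

section Quadratic

variable {E E' : Type*} [AddCommGroup E] [Module ℝ E] [AddCommGroup E'] [Module ℝ E']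
  {f : E → ℝ} {B : E →ₗ[ℝ] E →ₗ[ℝ] ℝ} {l : E →ₗ[ℝ] ℝ} {c : ℝ}

theorem apply_add_of_forall_eq_bilin (hf : ∀ x, f x = B x x + l x + c) (x y : E) :
    f (x + y) = f x + B y y + ((B + B.flip) x + l) y := by
  simp only [hf, map_add, LinearMap.add_apply, LinearMap.flip_apply]
  ring

theorem IsQuadratic.comp_affineMap (hf : IsQuadratic f) (A : E' →ᵃ[ℝ] E) :
    IsQuadratic (f ∘ A) := by
  obtain ⟨B, l, c, hf⟩ := hf
  refine ⟨B.compl₁₂ A.linear A.linear, ((B + B.flip) (A 0) + l) ∘ₗ A.linear, f (A 0),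
    fun y => ?_⟩
  rw [Function.comp_apply, congrFun A.decomp y, Pi.add_apply, add_comm,
    apply_add_of_forall_eq_bilin hf]
  simp only [LinearMap.compl₁₂_apply, LinearMap.comp_apply]
  ring

theorem bilin_nonneg_and_of_bddBelow_coset (hf : ∀ x, f x = B x x + l x + c)
    {K : Submodule ℝ E} {x : E} (hbdd : BddBelow (range fun k : K => f (x + k)))
    {d : E} (hd : d ∈ K) : 0 ≤ B d d ∧ (B d d = 0 → ((B + B.flip) x + l) d = 0) := by
  have hline : BddBelow (range fun t : ℝ => B d d * t ^ 2 + ((B + B.flip) x + l) d * t + f x) := by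
    refine hbdd.mono (range_subset_iff.2 fun t => mem_range.2 ⟨⟨t • d, K.smul_mem t hd⟩, ?_⟩)
    simp only [apply_add_of_forall_eq_bilin hf, map_smul, LinearMap.smul_apply, smul_eq_mul]
    ring
  refine ⟨nonneg_of_bddBelow_quadratic hline, fun h0 => eq_zero_of_bddBelow_linear (c := f x) ?_⟩
  simpa [h0] using hline

theorem exists_affineMap_minimizer_on_cosets (hf : ∀ x, f x = B x x + l x + c)
    (K : Submodule ℝ E) [FiniteDimensional ℝ K] :
    ∃ Ψ : E →ᵃ[ℝ] E, ∀ x, Ψ x - x ∈ K ∧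
      (BddBelow (range fun k : K => f (x + k)) → ∀ k : K, f (Ψ x) ≤ f (x + k)) := by
  -- `Q` is the Hessian of `f` along `K`, `ψ x` the differential of `f` at `x` along `K`,
  -- and `Ψ x = x - R (ψ x)` solves the first-order condition `Q (Ψ x - x) = -ψ x`.
  set Q : K →ₗ[ℝ] K →ₗ[ℝ] ℝ := (B + B.flip).compl₁₂ K.subtype K.subtype
  obtain ⟨R, hR⟩ := Q.flip.exists_rightInverseOn_range
  set ψ : E →ᵃ[ℝ] K →ₗ[ℝ] ℝ :=
    ((B + B.flip).compl₂ K.subtype).toAffineMap + AffineMap.const ℝ E (l ∘ₗ K.subtype)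
  have hψ (x : E) (k : K) : ψ x k = ((B + B.flip) x + l) k := rfl
  refine ⟨AffineMap.id ℝ E - (K.subtype ∘ₗ R).toAffineMap.comp ψ,
    fun x => ⟨?_, fun hbdd k => ?_⟩⟩
  · simp
  · have hcoef {d : E} (hd : d ∈ K) := bilin_nonneg_and_of_bddBelow_coset hf hbdd hd
    have hann : ψ x ∈ (LinearMap.ker Q).dualAnnihilator := by
      refine (Submodule.mem_dualAnnihilator _).2 fun d hd => ?_
      have hQd : B d d + B d d = 0 := congr($(LinearMap.mem_ker.1 hd) d)
      exact (hcoef d.2).2 (by linarith)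
    rw [LinearMap.dualAnnihilator_ker_eq_range_flip] at hann
    have hRψ (d : K) : (B + B.flip) d (R (ψ x)) = ψ x d := congr($(hR _ hann) d)
    set d : K := k + R (ψ x)
    have hxk : x + k = (x - R (ψ x)) + d := by simp only [d, Submodule.coe_add]; abel
    have hcross : ((B + B.flip) (x - R (ψ x)) + l) d = 0 := by
      have := hRψ d
      simp only [hψ, LinearMap.add_apply, LinearMap.flip_apply, map_sub, LinearMap.sub_apply] at this ⊢
      linarith
    simp only [AffineMap.coe_sub, Pi.sub_apply, AffineMap.coe_id, id, AffineMap.coe_comp,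
      LinearMap.coe_toAffineMap, Function.comp_apply, LinearMap.comp_apply, Submodule.subtype_apply]
    rw [hxk, apply_add_of_forall_eq_bilin hf, hcross, add_zero]
    linarith [(hcoef d.2).1]

end Quadratic

theorem IsFWSet.preimage_affineMap {E E' : Type*} [AddCommGroup E] [Module ℝ E]
    [FiniteDimensional ℝ E] [AddCommGroup E'] [Module ℝ E'] {F : Set E'} (hF : IsFWSet F)
    (T : E →ᵃ[ℝ] E') (hrange : F ⊆ range T) : IsFWSet (T ⁻¹' F) := by
  intro f hf hbdd
  obtain ⟨B, l, c, hfB⟩ := id hf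
  obtain ⟨σ, hσ⟩ := T.exists_rightInverseOn_range
  obtain ⟨Ψ, hΨ⟩ := exists_affineMap_minimizer_on_cosets hfB (LinearMap.ker T.linear)
  set Φ := Ψ.comp σ
  have hΦF : Φ '' F ⊆ T ⁻¹' F := by
    rintro _ ⟨y, hy, rfl⟩
    rwa [mem_preimage, AffineMap.comp_apply, ← add_sub_cancel (σ y) (Ψ (σ y)),
      T.apply_add_of_mem_ker _ (hΨ _).1, hσ y (hrange hy)]
  have hΦ_le (x : E) (hx : x ∈ T ⁻¹' F) : f (Φ (T x)) ≤ f x := by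
    set z := σ (T x)
    have hTz : T z = T x := hσ _ ⟨x, rfl⟩
    have hbdd_z : BddBelow (range fun k : LinearMap.ker T.linear => f (z + k)) := by
      refine hbdd.mono (range_subset_iff.2 fun k => mem_image_of_mem f ?_)
      rwa [mem_preimage, T.apply_add_of_mem_ker _ k.2, hTz]
    have hmin := (hΨ z).2 hbdd_z ⟨x - z, T.sub_mem_ker_of_apply_eq hTz.symm⟩
    rwa [Submodule.coe_mk, add_sub_cancel] at hmin
  obtain ⟨y₀, hy₀, hy₀_min⟩ := hF (f ∘ Φ) (hf.comp_affineMap _)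
    (hbdd.mono (by rw [image_comp]; exact image_mono hΦF))
  exact ⟨Φ y₀, hΦF (mem_image_of_mem _ hy₀), fun x hx => (hy₀_min _ hx).trans (hΦ_le x hx)⟩

theorem FW_preimage_range {n m : ℕ} (F : Set (EuclideanSpace ℝ (Fin m)))
    (T : EuclideanSpace ℝ (Fin n) →ᵃ[ℝ] EuclideanSpace ℝ (Fin m))
    (hrange : F ⊆ Set.range T) (hF : IsFWSet F) : IsFWSet (T ⁻¹' F) :=
  hF.preimage_affineMap T hrange
end
end

section
/- A convex set F ⊆ ℝⁿ has no f-asymptotes if and only if T(F) is closed for every affine map T. -/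
open Pointwise

noncomputable section

/-- An affine subspace `M` is an f-asymptote of `F` if it is nonempty, disjoint
from `F`, and at zero distance from `F`. -/
def IsFAsymptote {E : Type*} [NormedAddCommGroup E] [NormedSpace ℝ E]
    (M : AffineSubspace ℝ E) (F : Set E) : Prop :=
  (M : Set E).Nonempty ∧ F ∩ (M : Set E) = ∅ ∧
    ∀ ε : ℝ, 0 < ε → ∃ x ∈ F, ∃ y ∈ (M : Set E), dist x y < ε

/-!
If `y ∈ closure (T '' F) \ T '' F` for an affine map `T`, the fibre `T ⁻¹' {y}` is an
f-asymptote of `F`: it is nonempty because the range of `T` is closed, and points of `F` whose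
images approach `y` can be moved into the fibre by a distance controlled by a bounded right
inverse of the linear part of `T`. Conversely, an f-asymptote `M` is a fibre of the quotient map
by its direction, and that fibre's image point lies in the closure of the image of `F` but not
in the image itself.
-/

theorem LinearMap.exists_preimage_norm_le_of_finiteDimensional {𝕜 E F : Type*}
    [NontriviallyNormedField 𝕜] [CompleteSpace 𝕜] [NormedAddCommGroup E] [NormedSpace 𝕜 E]
    [NormedAddCommGroup F] [NormedSpace 𝕜 F] [FiniteDimensional 𝕜 F] (f : E →ₗ[𝕜] F) :
    ∃ C ≥ 0, ∀ y ∈ LinearMap.range f, ∃ x, f x = y ∧ ‖x‖ ≤ C * ‖y‖ := by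
  obtain ⟨g, hg⟩ := f.rangeRestrict.exists_rightInverse_of_surjective f.range_rangeRestrict
  refine ⟨‖LinearMap.toContinuousLinearMap g‖, norm_nonneg _, fun y hy => ⟨g ⟨y, hy⟩, ?_, ?_⟩⟩
  · simpa using congrArg Subtype.val (LinearMap.congr_fun hg ⟨y, hy⟩)
  · exact (LinearMap.toContinuousLinearMap g).le_opNorm ⟨y, hy⟩

theorem AffineSubspace.mem_comap_affineSpan_singleton {k P₁ P₂ V₁ V₂ : Type*} [Ring k]
    [AddCommGroup V₁] [Module k V₁] [AddTorsor V₁ P₁] [AddCommGroup V₂] [Module k V₂]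
    [AddTorsor V₂ P₂] {f : P₁ →ᵃ[k] P₂} {x : P₁} {y : P₂} :
    x ∈ (affineSpan k {y}).comap f ↔ f x = y := by
  rw [mem_comap, mem_affineSpan_singleton]

section

open AffineSubspace

variable {E F : Type*} [NormedAddCommGroup E] [NormedSpace ℝ E]
  [NormedAddCommGroup F] [NormedSpace ℝ F]

theorem isFAsymptote_comap_of_mem_closure_image [FiniteDimensional ℝ F] (T : E →ᵃ[ℝ] F)
    {s : Set E} {y : F} (hy : y ∈ closure (T '' s)) (hys : y ∉ T '' s) :
    IsFAsymptote ((affineSpan ℝ {y}).comap T) s := by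
  have himage : T '' s ⊆ (⊤ : AffineSubspace ℝ E).map T := by
    rw [coe_map]
    exact Set.image_mono (Set.subset_univ s)
  have hrange : y ∈ (⊤ : AffineSubspace ℝ E).map T :=
    (map T ⊤).closed_of_finiteDimensional.closure_subset_iff.2 himage hy
  obtain ⟨a, -, ha⟩ := mem_map.1 hrange
  obtain ⟨C, hC₀, hC⟩ := T.linear.exists_preimage_norm_le_of_finiteDimensional
  refine ⟨⟨a, mem_comap_affineSpan_singleton.2 ha⟩, ?_, fun ε hε => ?_⟩
  · exact Set.eq_empty_of_forall_notMem fun x ⟨hxs, hxM⟩ =>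
      hys ⟨x, hxs, mem_comap_affineSpan_singleton.1 hxM⟩
  obtain ⟨_, ⟨x, hxs, rfl⟩, hx⟩ := Metric.mem_closure_iff.1 hy (ε / (C + 1)) (by positivity)
  obtain ⟨v, hv, hvC⟩ := hC (y - T x) ⟨a - x, by rw [← vsub_eq_sub, ← ha, T.linearMap_vsub]; rfl⟩
  refine ⟨x, hxs, v + x, mem_comap_affineSpan_singleton.2 ?_, ?_⟩
  · rw [← vadd_eq_add, T.map_vadd, hv, vadd_eq_add, sub_add_cancel]
  · rw [dist_comm, dist_add_self_left]
    calc ‖v‖ ≤ C * dist y (T x) := by rwa [dist_eq_norm]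
      _ ≤ (C + 1) * dist y (T x) := by gcongr; linarith
      _ < ε := by rwa [lt_div_iff₀' (by positivity)] at hx

theorem mem_closure_image_of_isFAsymptote_comap {T : E →ᵃ[ℝ] F} (hT : UniformContinuous T)
    {s : Set E} {y : F} (hM : IsFAsymptote ((affineSpan ℝ {y}).comap T) s) :
    y ∈ closure (T '' s) \ T '' s := by
  obtain ⟨-, hdisj, hnear⟩ := hM
  refine ⟨Metric.mem_closure_iff.2 fun ε hε => ?_, ?_⟩
  · obtain ⟨δ, hδ, hTδ⟩ := Metric.uniformContinuous_iff.1 hT ε hε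
    obtain ⟨x, hxs, q, hqM, hxq⟩ := hnear δ hδ
    refine ⟨T x, Set.mem_image_of_mem T hxs, ?_⟩
    rw [← mem_comap_affineSpan_singleton.1 hqM, dist_comm]
    exact hTδ hxq
  · rintro ⟨x, hxs, hx⟩
    exact hdisj.subset ⟨hxs, mem_comap_affineSpan_singleton.2 hx⟩

end

theorem AffineSubspace.exists_comap_affineSpan_singleton_eq {V : Type*} [AddCommGroup V]
    [Module ℝ V] [FiniteDimensional ℝ V] (M : AffineSubspace ℝ V) {p : V} (hp : p ∈ M) :
    ∃ (m : ℕ) (T : V →ᵃ[ℝ] EuclideanSpace ℝ (Fin m)), (affineSpan ℝ {T p}).comap T = M := by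
  let e := LinearEquiv.ofFinrankEq (V ⧸ M.direction)
    (EuclideanSpace ℝ (Fin (Module.finrank ℝ (V ⧸ M.direction)))) finrank_euclideanSpace_fin.symm
  refine ⟨_, (e.toLinearMap ∘ₗ M.direction.mkQ).toAffineMap, ?_⟩
  ext x
  rw [mem_comap_affineSpan_singleton]
  simp only [LinearMap.coe_toAffineMap, LinearMap.coe_comp, Function.comp_apply,
    LinearEquiv.coe_coe, e.injective.eq_iff, Submodule.mkQ_apply, Submodule.Quotient.eq]
  rw [← vsub_eq_sub, AffineSubspace.vsub_right_mem_direction_iff_mem hp]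

theorem no_asymptote_iff_affine_images_closed_general {n : ℕ}
    (F : Set (EuclideanSpace ℝ (Fin n))) :
    (∀ M : AffineSubspace ℝ (EuclideanSpace ℝ (Fin n)), ¬ IsFAsymptote M F) ↔
      (∀ (m : ℕ) (T : EuclideanSpace ℝ (Fin n) →ᵃ[ℝ] EuclideanSpace ℝ (Fin m)),
        IsClosed (T '' F)) := by
  refine ⟨fun h m T => isClosed_of_closure_subset fun y hy => ?_, fun h M hM => ?_⟩
  · by_contra hyF
    exact h _ (isFAsymptote_comap_of_mem_closure_image T hy hyF)
  · obtain ⟨p, hp⟩ := hM.1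
    obtain ⟨m, T, rfl⟩ := M.exists_comap_affineSpan_singleton_eq hp
    obtain ⟨K, hK⟩ := T.lipschitzWith_of_finiteDimensional
    obtain ⟨hcl, hnot⟩ := mem_closure_image_of_isFAsymptote_comap hK.uniformContinuous hM
    exact hnot ((h m T).closure_subset hcl)

theorem no_asymptote_iff_affine_images_closed {n : ℕ}
    (F : Set (EuclideanSpace ℝ (Fin n))) (hconv : Convex ℝ F) (hcl : IsClosed F) :
    (∀ M : AffineSubspace ℝ (EuclideanSpace ℝ (Fin n)), ¬ IsFAsymptote M F) ↔
      (∀ (m : ℕ) (T : EuclideanSpace ℝ (Fin n) →ᵃ[ℝ] EuclideanSpace ℝ (Fin m)),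
        IsClosed (T '' F)) :=
  no_asymptote_iff_affine_images_closed_general F
end
end

section
/- If a convex set F ⊆ ℝⁿ has the property that P(F) is closed for every orthogonal projection P, then every polynomial f bounded below on F with at least one nonempty convex sub-level set on F attains its infimum on F. -/
/-!
Let `m` be the infimum and `C` the convex sublevel set; `C` is closed because `F`, its own
projection, is. If `C` is unbounded it has a nonzero recession direction `d`. Restricted to any
ray in direction `d` issuing from `C`, the polynomial is a one-variable polynomial bounded on
`[0, ∞)`, hence constant, so it is invariant along `d`. Projecting `C` orthogonally to all the
directions of invariance found so far keeps the infimum and lowers the dimension of the ambient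
subspace, so after finitely many steps `C` is bounded, hence compact, and the infimum is attained
on it. Closedness of the projections of `F` lifts the minimizer back to a point of `F`.
-/

open Pointwise

noncomputable section

open Set Filter Topology Bornology Submodule Module

def recessionCone {E : Type*} [AddCommGroup E] [Module ℝ E] (C : Set E) : Set E :=
  {d | ∀ z ∈ C, ∀ t : ℝ, 0 ≤ t → z + t • d ∈ C}

theorem Convex.mem_recessionCone_of_tendsto {E : Type*} [AddCommGroup E] [Module ℝ E]
    [TopologicalSpace E] [IsTopologicalAddGroup E] [ContinuousSMul ℝ E] {C : Set E}
    (hconv : Convex ℝ C) (hC : IsClosed C) {ι : Type*} {l : Filter ι} [l.NeBot] {x : ι → E}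
    {r : ι → ℝ} (hx : ∀ i, x i ∈ C) (hr : Tendsto r l atTop) {d : E}
    (hd : Tendsto (fun i => (r i)⁻¹ • x i) l (𝓝 d)) : d ∈ recessionCone C := by
  intro z hz t ht
  have hc : Tendsto (fun i => t * (r i)⁻¹) l (𝓝 0) := by
    simpa using hr.inv_tendsto_atTop.const_mul t
  have hlim : Tendsto (fun i => z + t • ((r i)⁻¹ • x i) - (t * (r i)⁻¹) • z) l
      (𝓝 (z + t • d)) := by
    simpa using (tendsto_const_nhds.add (hd.const_smul t)).sub (hc.smul_const z)
  refine hC.mem_of_tendsto hlim ?_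
  -- eventually `t ≤ r i`, and then the point lies on the segment from `z` to `x i`
  filter_upwards [hr.eventually_ge_atTop t, hr.eventually_gt_atTop 0] with i hti hri
  have hc1 : t * (r i)⁻¹ ≤ 1 := by rw [← div_eq_mul_inv]; exact (div_le_one hri).mpr hti
  convert hconv hz (hx i) (sub_nonneg.mpr hc1)
    (by positivity : 0 ≤ t * (r i)⁻¹) (sub_add_cancel _ _) using 1
  module

theorem exists_ne_zero_mem_recessionCone {E : Type*} [NormedAddCommGroup E] [NormedSpace ℝ E]
    [ProperSpace E] {C : Set E} (hconv : Convex ℝ C) (hC : IsClosed C) (hb : ¬IsBounded C) :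
    ∃ d ≠ 0, d ∈ recessionCone C := by
  have hx : ∀ j : ℕ, ∃ x ∈ C, (j : ℝ) < ‖x‖ := by
    rw [isBounded_iff_forall_norm_le] at hb
    push Not at hb
    exact fun j => hb j
  choose x hxC hxj using hx
  have hunit : ∀ j, ‖x j‖⁻¹ • x j ∈ Metric.sphere (0 : E) 1 := fun j => by
    simp [norm_smul, ((Nat.cast_nonneg j).trans_lt (hxj j)).ne']
  obtain ⟨d, hd, ψ, hψ, hlim⟩ := (isCompact_sphere (0 : E) 1).tendsto_subseq hunit
  have hnorm : Tendsto (fun i => ‖x (ψ i)‖) atTop atTop :=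
    tendsto_atTop_mono (fun i => (Nat.cast_le.mpr hψ.le_apply).trans (hxj (ψ i)).le)
      tendsto_natCast_atTop_atTop
  refine ⟨d, ?_, hconv.mem_recessionCone_of_tendsto hC (fun i => hxC (ψ i)) hnorm hlim⟩
  rintro rfl
  simp at hd

theorem Polynomial.eval_eq_eval_zero_of_isBounded {p : Polynomial ℝ}
    (hp : IsBounded ((fun t => p.eval t) '' Ici 0)) (t : ℝ) : p.eval t = p.eval 0 := by
  obtain ⟨M, hM⟩ := isBounded_iff_forall_norm_le.mp hp
  have hdeg : p.degree ≤ 0 := by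
    by_contra! hdeg
    obtain ⟨s, hs, hs0⟩ :=
      ((p.abs_tendsto_atTop hdeg).eventually_gt_atTop M |>.and (eventually_ge_atTop 0)).exists
    exact hs.not_ge (hM _ ⟨s, hs0, rfl⟩)
  rw [eq_C_of_degree_le_zero hdeg]
  simp

def IsPolynomialOnLines {E : Type*} [AddCommGroup E] [Module ℝ E] (φ : E → ℝ) : Prop :=
  ∀ b d : E, ∃ p : Polynomial ℝ, ∀ t : ℝ, p.eval t = φ (b + t • d)

theorem MvPolynomial.isPolynomialOnLines_eval {ι : Type*} (f : MvPolynomial ι ℝ) :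
    IsPolynomialOnLines fun x : EuclideanSpace ℝ ι => eval (fun i => x i) f := by
  intro b d
  refine ⟨aeval (fun i => Polynomial.C (b i) + Polynomial.C (d i) * Polynomial.X) f,
    fun t => ?_⟩
  change _ = eval (fun i => (b + t • d) i) f
  rw [← Polynomial.coe_aeval_eq_eval, comp_aeval_apply, ← coe_aeval_eq_eval]
  refine congrArg (aeval · f) ?_
  funext i
  simp only [map_add, map_mul, Polynomial.aeval_C, Polynomial.aeval_X, Algebra.algebraMap_self,
    RingHom.id_apply, PiLp.add_apply, PiLp.smul_apply, smul_eq_mul, mul_comm]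

namespace IsPolynomialOnLines

variable {E : Type*} [AddCommGroup E] [Module ℝ E] {φ : E → ℝ}

theorem apply_add_smul_eq (hφ : IsPolynomialOnLines φ) {b d : E}
    (hb : IsBounded ((fun t : ℝ => φ (b + t • d)) '' Ici 0)) (t : ℝ) : φ (b + t • d) = φ b := by
  obtain ⟨p, hp⟩ := hφ b d
  have h := p.eval_eq_eval_zero_of_isBounded (by simpa only [hp] using hb) t
  rwa [hp, hp, zero_smul, add_zero] at h

theorem apply_add_eq_of_mem_sup_span (hφ : IsPolynomialOnLines φ) {C : Set E}
    (hC : IsBounded (φ '' C)) {V : Submodule ℝ E} (hV : ∀ x ∈ C, ∀ v ∈ V, φ (x + v) = φ x)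
    {d : E} (hd : d ∈ recessionCone C) : ∀ x ∈ C, ∀ w ∈ V ⊔ ℝ ∙ d, φ (x + w) = φ x := by
  intro x hx w hw
  obtain ⟨v, hv, _, hs, rfl⟩ := mem_sup.mp hw
  obtain ⟨t, rfl⟩ := mem_span_singleton.mp hs
  have hray : (fun s : ℝ => φ (x + v + s • d)) '' Ici 0 ⊆ φ '' C := by
    rintro _ ⟨s, hs, rfl⟩
    refine ⟨x + s • d, hd x hx s hs, ?_⟩
    change _ = φ (x + v + s • d)
    rw [add_right_comm, hV _ (hd x hx s hs) v hv]
  rw [← add_assoc, hφ.apply_add_smul_eq (hC.subset hray), hV x hx v hv]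

end IsPolynomialOnLines

theorem IsGLB.image_sep_le {α β : Type*} [LinearOrder β] {f : α → β} {s : Set α} {m b : β}
    (hm : IsGLB (f '' s) m) (hb : {x ∈ s | f x ≤ b}.Nonempty) :
    IsGLB (f '' {x ∈ s | f x ≤ b}) m := by
  obtain ⟨x₀, hx₀, hx₀b⟩ := hb
  refine ⟨fun _ ⟨x, hx, hfx⟩ => hm.1 ⟨x, hx.1, hfx⟩, fun c hc => hm.2 ?_⟩
  rintro _ ⟨x, hx, rfl⟩
  rcases le_total (f x) b with hxb | hbx
  · exact hc ⟨x, ⟨hx, hxb⟩, rfl⟩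
  · exact (hc ⟨x₀, ⟨hx₀, hx₀b⟩, rfl⟩).trans (hx₀b.trans hbx)

section InnerProductSpace

variable {E : Type*} [NormedAddCommGroup E] [InnerProductSpace ℝ E] [FiniteDimensional ℝ E]

theorem Submodule.finrank_orthogonal_sup_span_singleton_lt {V : Submodule ℝ E} {d : E}
    (hd : d ∈ Vᗮ) (hd0 : d ≠ 0) : finrank ℝ ↥(V ⊔ ℝ ∙ d)ᗮ < finrank ℝ ↥Vᗮ := by
  refine finrank_lt_finrank_of_lt (SetLike.lt_iff_le_and_exists.mpr
    ⟨orthogonal_le le_sup_left, d, hd, fun hd' => hd0 ?_⟩)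
  exact inner_self_eq_zero.mp
    ((mem_orthogonal _ d).mp hd' d (mem_sup_right (mem_span_singleton_self d)))

theorem apply_starProjection_orthogonal_eq {φ : E → ℝ} {C : Set E} {W : Submodule ℝ E}
    (hW : ∀ x ∈ C, ∀ w ∈ W, φ (x + w) = φ x) {x : E} (hx : x ∈ C) :
    φ (Wᗮ.starProjection x) = φ x := by
  rw [starProjection_orthogonal_val, sub_eq_add_neg,
    hW x hx _ (W.neg_mem (W.starProjection_apply_mem x))]

/-- The minimization of `φ` over `F` after factoring out the directions `V` along which `φ` is
invariant: `C` plays the role of the sublevel set, moved into `Vᗮ`. -/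
structure IsReducedProblem (φ : E → ℝ) (F : Set E) (m : ℝ) (V : Submodule ℝ E) (C : Set E) :
    Prop where
  isClosed : IsClosed C
  convex : Convex ℝ C
  subset_orthogonal : C ⊆ Vᗮ
  bddAbove : BddAbove (φ '' C)
  isGLB : IsGLB (φ '' C) m
  apply_add_eq : ∀ x ∈ C, ∀ v ∈ V, φ (x + v) = φ x
  subset_image : C ⊆ Vᗮ.starProjection '' F

namespace IsReducedProblem

variable {φ : E → ℝ} {F C : Set E} {m : ℝ} {V W : Submodule ℝ E}

theorem nonempty (h : IsReducedProblem φ F m V C) : C.Nonempty := by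
  rcases C.eq_empty_or_nonempty with rfl | hC
  · exact absurd (isGLB_empty_iff.mp (by simpa using h.isGLB)) (not_isTop m)
  · exact hC

theorem isBounded_image (h : IsReducedProblem φ F m V C) : IsBounded (φ '' C) :=
  (IsOrderBornology.isBounded_iff_bddBelow_bddAbove _).mpr ⟨⟨m, h.isGLB.1⟩, h.bddAbove⟩

theorem exists_mem_eq (h : IsReducedProblem φ F m V C) {a : E} (ha : a ∈ C) :
    ∃ x ∈ F, φ x = φ a := by
  obtain ⟨x, hxF, rfl⟩ := h.subset_image ha
  refine ⟨x, hxF, ?_⟩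
  calc φ x = φ (Vᗮ.starProjection x + V.starProjection x) := by
        rw [add_comm, starProjection_add_starProjection_orthogonal]
    _ = φ (Vᗮ.starProjection x) := h.apply_add_eq _ ha _ (V.starProjection_apply_mem x)

theorem exists_eq_of_isBounded (h : IsReducedProblem φ F m V C) (hφ : Continuous φ)
    (hb : IsBounded C) : ∃ x ∈ F, φ x = m := by
  have hK : IsCompact (φ '' C) := (Metric.isCompact_of_isClosed_isBounded h.isClosed hb).image hφ
  obtain ⟨a, ha, rfl⟩ := h.isGLB.mem_of_isClosed (h.nonempty.image φ) hK.isClosed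
  exact h.exists_mem_eq ha

theorem project (h : IsReducedProblem φ F m V C) (hφ : Continuous φ)
    (hF : IsClosed (Wᗮ.starProjection '' F)) (hVW : V ≤ W)
    (hW : ∀ x ∈ C, ∀ w ∈ W, φ (x + w) = φ x) :
    IsReducedProblem φ F m W (closure (Wᗮ.starProjection '' C)) := by
  have himage : φ '' (Wᗮ.starProjection '' C) = φ '' C := by
    rw [image_image]
    exact image_congr fun x hx => apply_starProjection_orthogonal_eq hW hx
  have hsub : φ '' closure (Wᗮ.starProjection '' C) ⊆ closure (φ '' C) :=
    himage ▸ image_closure_subset_closure_image hφ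
  refine
    { isClosed := isClosed_closure
      convex := (h.convex.linear_image Wᗮ.starProjection.toLinearMap).closure
      subset_orthogonal := closure_minimal (image_subset_iff.mpr fun x _ =>
        Wᗮ.starProjection_apply_mem x) Wᗮ.closed_of_finiteDimensional
      bddAbove := h.bddAbove.closure.mono hsub
      isGLB := (isGLB_iff_of_subset_of_subset_closure
        (himage ▸ image_mono subset_closure) hsub).mp h.isGLB
      apply_add_eq := fun y hy w hw => ?_
      subset_image := closure_minimal ?_ hF }
  · refine closure_minimal ?_ (isClosed_eq (hφ.comp (continuous_add_const w)) hφ) hy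
    rintro _ ⟨z, hz, rfl⟩
    have hneg : -W.starProjection z ∈ W := W.neg_mem (W.starProjection_apply_mem z)
    change φ (_ + w) = φ _
    rw [starProjection_orthogonal_val, sub_eq_add_neg, add_assoc, hW z hz _ (W.add_mem hneg hw),
      hW z hz _ hneg]
  · calc Wᗮ.starProjection '' C ⊆ Wᗮ.starProjection '' (Vᗮ.starProjection '' F) :=
          image_mono h.subset_image
      _ = Wᗮ.starProjection '' F := by
        rw [image_image]
        exact image_congr' fun x => DFunLike.congr_fun
          (starProjection_comp_starProjection_of_le (orthogonal_le hVW)) x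

theorem exists_eq (h : IsReducedProblem φ F m V C) (hφ : IsPolynomialOnLines φ)
    (hφc : Continuous φ) (hF : ∀ K : Submodule ℝ E, IsClosed (K.starProjection '' F)) :
    ∃ x ∈ F, φ x = m := by
  induction hk : finrank ℝ Vᗮ using Nat.strong_induction_on generalizing V C with
  | _ k ih =>
  by_cases hb : IsBounded C
  · exact h.exists_eq_of_isBounded hφc hb
  obtain ⟨d, hd0, hd⟩ := exists_ne_zero_mem_recessionCone h.convex h.isClosed hb
  obtain ⟨z, hz⟩ := h.nonempty
  have hdV : d ∈ Vᗮ := by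
    simpa using sub_mem (h.subset_orthogonal (hd z hz 1 zero_le_one)) (h.subset_orthogonal hz)
  exact ih _ (hk ▸ finrank_orthogonal_sup_span_singleton_lt hdV hd0)
    (h.project hφc (hF _) le_sup_left
      (hφ.apply_add_eq_of_mem_sup_span h.isBounded_image h.apply_add_eq hd)) rfl

end IsReducedProblem

theorem isReducedProblem_sublevel {φ : E → ℝ} {F : Set E} {m α : ℝ} (hF : IsClosed F)
    (hφ : Continuous φ) (hm : IsGLB (φ '' F) m) (hne : {x ∈ F | φ x ≤ α}.Nonempty)
    (hconv : Convex ℝ {x ∈ F | φ x ≤ α}) :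
    IsReducedProblem φ F m ⊥ {x ∈ F | φ x ≤ α} where
  isClosed := hF.inter (isClosed_le hφ continuous_const)
  convex := hconv
  subset_orthogonal := by simp
  bddAbove := ⟨α, by rintro _ ⟨x, hx, rfl⟩; exact hx.2⟩
  isGLB := hm.image_sep_le hne
  apply_add_eq := by simp
  subset_image := by simp [starProjection_top]

end InnerProductSpace

theorem polynomial_attains_inf_of_projections_closed_general {n : ℕ}
    (F : Set (EuclideanSpace ℝ (Fin n)))
    (hproj : ∀ K : Submodule ℝ (EuclideanSpace ℝ (Fin n)),
      IsClosed ((fun x => (K.orthogonalProjectionOnto x : EuclideanSpace ℝ (Fin n))) '' F))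
    (f : MvPolynomial (Fin n) ℝ)
    (hbdd : BddBelow ((fun x => MvPolynomial.eval (fun i => x i) f) '' F))
    (hlevel : ∃ α : ℝ,
      {x ∈ F | MvPolynomial.eval (fun i => x i) f ≤ α}.Nonempty ∧
      Convex ℝ {x ∈ F | MvPolynomial.eval (fun i => x i) f ≤ α}) :
    ∃ x₀ ∈ F, ∀ x ∈ F,
      MvPolynomial.eval (fun i => x₀ i) f ≤ MvPolynomial.eval (fun i => x i) f := by
  obtain ⟨α, hne, hconv⟩ := hlevel
  have hφ : Continuous fun x : EuclideanSpace ℝ (Fin n) => MvPolynomial.eval (fun i => x i) f :=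
    f.continuous_eval.comp (PiLp.continuous_ofLp 2 _)
  have hm := isGLB_csInf ((hne.mono (sep_subset _ _)).image _) hbdd
  have hF : IsClosed F := by simpa [starProjection_top] using hproj ⊤
  obtain ⟨x₀, hx₀, hx₀m⟩ := (isReducedProblem_sublevel hF hφ hm hne hconv).exists_eq
    f.isPolynomialOnLines_eval hφ hproj
  exact ⟨x₀, hx₀, fun x hx => hx₀m ▸ hm.1 ⟨x, hx, rfl⟩⟩

theorem polynomial_attains_inf_of_projections_closed {n : ℕ}
    (F : Set (EuclideanSpace ℝ (Fin n))) (hconv : Convex ℝ F)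
    (hproj : ∀ K : Submodule ℝ (EuclideanSpace ℝ (Fin n)),
      IsClosed ((fun x => (K.orthogonalProjectionOnto x : EuclideanSpace ℝ (Fin n))) '' F))
    (f : MvPolynomial (Fin n) ℝ)
    (hbdd : BddBelow ((fun x => MvPolynomial.eval (fun i => x i) f) '' F))
    (hlevel : ∃ α : ℝ,
      {x ∈ F | MvPolynomial.eval (fun i => x i) f ≤ α}.Nonempty ∧
      Convex ℝ {x ∈ F | MvPolynomial.eval (fun i => x i) f ≤ α}) :
    ∃ x₀ ∈ F, ∀ x ∈ F,
      MvPolynomial.eval (fun i => x₀ i) f ≤ MvPolynomial.eval (fun i => x i) f :=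
  polynomial_attains_inf_of_projections_closed_general F hproj f hbdd hlevel
end
end

section
/- If a polynomial f on ℝⁿ is bounded (both above and below) on the ray x + ℝ₊d through each point x of a set with nonempty interior, then f is invariant under translation by d: f(y + td) = f(y) for all y ∈ ℝⁿ and t ∈ ℝ. -/
open Polynomial Filter

noncomputable def linePoly {n : ℕ} (f : MvPolynomial (Fin n) ℝ) (x v : Fin n → ℝ) :
    Polynomial ℝ :=
  MvPolynomial.aeval (fun i => Polynomial.C (x i) + Polynomial.C (v i) * Polynomial.X) f

lemma linePoly_eval {n : ℕ} (f : MvPolynomial (Fin n) ℝ) (x v : Fin n → ℝ) (t : ℝ) :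
    (linePoly f x v).eval t = MvPolynomial.eval (x + t • v) f := by
  induction f using MvPolynomial.induction_on with
  | C a => simp [linePoly]
  | add p q hp hq => simp only [linePoly, map_add, Polynomial.eval_add] at *; rw [hp, hq]
  | mul_X p i hp =>
    simp only [linePoly, map_mul, Polynomial.eval_mul, MvPolynomial.aeval_X,
      Polynomial.eval_add, Polynomial.eval_C, Polynomial.eval_mul, Polynomial.eval_X] at *
    rw [hp, MvPolynomial.eval_X, show (x + t • v) i = x i + v i * t from by simp [mul_comm]]

lemma const_of_bdd (p : Polynomial ℝ) (C : ℝ) (h : ∀ t, 0 ≤ t → |p.eval t| ≤ C) :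
    ∀ t, p.eval t = p.eval 0 := by
  have hb : Filter.IsBoundedUnder (· ≤ ·) Filter.atTop (fun t => |p.eval t|) :=
    ⟨C, Filter.eventually_map.2 (Filter.eventually_atTop.2 ⟨0, h⟩)⟩
  have hdeg := (Polynomial.abs_isBoundedUnder_iff p).1 hb
  intro t
  rw [Polynomial.eq_C_of_degree_le_zero hdeg]; simp

theorem polynomial_constant_along_direction {n : ℕ}
    (f : MvPolynomial (Fin n) ℝ) (d : Fin n → ℝ)
    (U : Set (Fin n → ℝ)) (hU : IsOpen U) (hUne : U.Nonempty)
    (hbdd : ∀ x ∈ U, ∃ C : ℝ, ∀ t : ℝ, 0 ≤ t →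
      |MvPolynomial.eval (x + t • d) f| ≤ C) :
    ∀ (x : Fin n → ℝ) (t : ℝ),
      MvPolynomial.eval (x + t • d) f = MvPolynomial.eval x f := by
  obtain ⟨x0, hx0⟩ := hUne
  have key : ∀ x ∈ U, ∀ t : ℝ, MvPolynomial.eval (x + t • d) f = MvPolynomial.eval x f := by
    intro x hx t
    obtain ⟨C, hC⟩ := hbdd x hx
    have hc := const_of_bdd (linePoly f x d) C
      (fun s hs => by rw [linePoly_eval]; exact hC s hs) t
    rw [linePoly_eval, linePoly_eval] at hc
    simpa using hc
  intro y t
  set v := y - x0 with hv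
  set q := linePoly f (x0 + t • d) v - linePoly f x0 v with hqdef
  have hq0 : q = 0 := by
    apply Polynomial.eq_zero_of_infinite_isRoot
    have hcont : Continuous fun s : ℝ => x0 + s • v := by continuity
    have hopen : IsOpen {s : ℝ | x0 + s • v ∈ U} := hU.preimage hcont
    have h0 : (0:ℝ) ∈ {s : ℝ | x0 + s • v ∈ U} := by simpa using hx0
    obtain ⟨ε, hε, hsub⟩ := Metric.isOpen_iff.1 hopen 0 h0
    have hIoo : (Set.Ioo (-(ε/2)) (ε/2)).Infinite := Set.Ioo_infinite (by linarith)
    refine hIoo.mono ?_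
    intro s hs
    have hsU : x0 + s • v ∈ U := by
      apply hsub
      rw [Metric.mem_ball, Real.dist_eq, sub_zero]
      rcases hs with ⟨h1, h2⟩
      rw [abs_lt]; constructor <;> linarith
    show q.IsRoot s
    simp only [hqdef, Polynomial.IsRoot, Polynomial.eval_sub, linePoly_eval, sub_eq_zero]
    rw [show (x0 + t • d) + s • v = (x0 + s • v) + t • d from by abel]
    exact key _ hsU t
  have h1 := congrArg (Polynomial.eval 1) hq0
  simp only [hqdef, Polynomial.eval_sub, linePoly_eval, Polynomial.eval_zero, sub_eq_zero,
    one_smul] at h1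
  rw [show (x0 + t • d) + v = y + t • d from by rw [hv]; abel,
    show x0 + v = y from by rw [hv]; abel] at h1
  exact h1
end

section
/- Every quadratic function that is quasi-convex and bounded below on a closed convex set without flat asymptotes attains its infimum on the set. -/
/-!
Let `μ` be the infimum and `C k = {x ∈ F | q x ≤ μ + 1 / (k + 1)}`; by quasi-convexity these are
nonempty convex sets. Take a subspace `V` maximal among those along which `q` is translation
invariant on `C 0`, and let `D k` be the closure of `C k + V`. The points of least norm of the
`D k` are orthogonal to `V`. Either they stay bounded, and a limit point `x` lies in every `D k`;
or their norms tend to infinity, and a limit of their directions is a recession direction `w ∉ V`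
of `D 0`. In the first case, since the absence of f-asymptotes makes `F + V` closed, `x + V`
meets `F`, and `q` is constant on `x + V` with value at most `μ`. In the second case `q` is
bounded on `D 0`, so the quadratic polynomial `t ↦ q (y + t • w)` is constant for `y ∈ D 0`, and
`V ⊔ ℝ ∙ w` contradicts the maximality of `V`.
-/

open Pointwise

noncomputable section

open Set Filter Topology
open scoped InnerProductSpace

theorem nonpos_of_forall_mul_le {c K : ℝ} (h : ∀ s : ℝ, 0 ≤ s → c * s ≤ K) : c ≤ 0 := by
  by_contra! hc
  have hK : 0 ≤ K := by simpa using h 0 le_rfl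
  have := h ((K + 1) / c) (by positivity)
  rw [mul_div_cancel₀ _ hc.ne'] at this
  linarith

theorem eq_zero_and_eq_zero_of_mul_sq_add_mul_mem_Icc {a b m M : ℝ}
    (h : ∀ t : ℝ, 0 ≤ t → a * t ^ 2 + b * t ∈ Icc m M) : a = 0 ∧ b = 0 := by
  -- for `f t = a * t ^ 2 + b * t`, the combination `f (2 * t) - 2 * f t = 2 * a * t ^ 2`
  -- isolates `a`
  have hsq : ∀ s : ℝ, 0 ≤ s → 2 * a * s ≤ M - 2 * m ∧ -(2 * a) * s ≤ 2 * M - m := by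
    intro s hs
    obtain ⟨hlo, hhi⟩ := h (√s) (Real.sqrt_nonneg s)
    obtain ⟨hlo₂, hhi₂⟩ := h (2 * √s) (by positivity)
    rw [Real.sq_sqrt hs] at hlo hhi
    rw [mul_pow, Real.sq_sqrt hs] at hlo₂ hhi₂
    constructor <;> linarith
  have ha : a = 0 := by
    have := nonpos_of_forall_mul_le fun s hs => (hsq s hs).1
    have := nonpos_of_forall_mul_le fun s hs => (hsq s hs).2
    linarith
  subst ha
  have := nonpos_of_forall_mul_le (c := b) fun t ht => by simpa using (h t ht).2
  have := nonpos_of_forall_mul_le (c := -b) (K := -m) fun t ht => by linarith [(h t ht).1]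
  exact ⟨rfl, by linarith⟩

namespace IsQuadratic

variable {E : Type*} [AddCommGroup E] [Module ℝ E] {q : E → ℝ}

theorem exists_add_smul_eq (hq : IsQuadratic q) (x w : E) :
    ∃ a b : ℝ, ∀ t : ℝ, q (x + t • w) = a * t ^ 2 + b * t + q x := by
  obtain ⟨B, l, c, hB⟩ := hq
  refine ⟨B w w, B x w + B w x + l w, fun t => ?_⟩
  simp only [hB, map_add, map_smul, LinearMap.add_apply, LinearMap.smul_apply, smul_eq_mul]
  ring

theorem add_smul_eq_of_mapsTo_Icc (hq : IsQuadratic q) {x w : E} {m M : ℝ}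
    (h : ∀ t : ℝ, 0 ≤ t → q (x + t • w) ∈ Icc m M) (s : ℝ) : q (x + s • w) = q x := by
  obtain ⟨a, b, hab⟩ := hq.exists_add_smul_eq x w
  obtain ⟨rfl, rfl⟩ := eq_zero_and_eq_zero_of_mul_sq_add_mul_mem_Icc (a := a) (b := b)
      (m := m - q x) (M := M - q x) fun t ht => by
    obtain ⟨hlo, hhi⟩ := hab t ▸ h t ht
    exact ⟨by linarith, by linarith⟩
  simp [hab]

theorem continuous {E : Type*} [NormedAddCommGroup E] [NormedSpace ℝ E] [FiniteDimensional ℝ E]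
    {q : E → ℝ} (hq : IsQuadratic q) : Continuous q := by
  obtain ⟨B, l, c, hB⟩ := hq
  have hBc : Continuous fun x => B x x :=
    B.toContinuousBilinearMap.continuous.clm_apply continuous_id
  exact funext hB ▸ (hBc.add l.continuous_of_finiteDimensional).add continuous_const

end IsQuadratic

def IsTranslationInvariantOn {E β : Type*} [AddCommGroup E] [Module ℝ E] (f : E → β) (S : Set E)
    (V : Submodule ℝ E) : Prop :=
  ∀ x ∈ S, ∀ v ∈ V, f (x + v) = f x

namespace IsTranslationInvariantOn

variable {E β : Type*} [AddCommGroup E] [Module ℝ E] {f : E → β} {S T : Set E}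
  {V W : Submodule ℝ E}

theorem mono (h : IsTranslationInvariantOn f S V) (hTS : T ⊆ S) :
    IsTranslationInvariantOn f T V :=
  fun x hx => h x (hTS hx)

theorem sup (hV : IsTranslationInvariantOn f S V) (hW : IsTranslationInvariantOn f S W)
    (hS : ∀ x ∈ S, ∀ v ∈ V, x + v ∈ S) : IsTranslationInvariantOn f S (V ⊔ W) := by
  intro x hx u hu
  obtain ⟨v, hv, w, hw, rfl⟩ := Submodule.mem_sup.mp hu
  rw [← add_assoc, hW _ (hS x hx v hv) w hw, hV x hx v hv]

theorem add_submodule (h : IsTranslationInvariantOn f S V) :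
    IsTranslationInvariantOn f (S + (V : Set E)) V := by
  rintro _ ⟨x, hx, v₁, hv₁, rfl⟩ v hv
  rw [add_assoc, h x hx _ (V.add_mem hv₁ hv), h x hx v₁ hv₁]

theorem mapsTo_add_submodule {t : Set β} (h : IsTranslationInvariantOn f S V)
    (hS : MapsTo f S t) : MapsTo f (S + (V : Set E)) t := by
  rintro _ ⟨x, hx, v, hv, rfl⟩
  exact h x hx v hv ▸ hS hx

variable [TopologicalSpace E] [ContinuousAdd E] [TopologicalSpace β] [T2Space β]

theorem closure (h : IsTranslationInvariantOn f S V) (hf : Continuous f) :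
    IsTranslationInvariantOn f (closure S) V := fun _ hx v hv =>
  closure_minimal (fun y hy => h y hy v hv)
    (isClosed_eq (hf.comp (continuous_add_const v)) hf) hx

end IsTranslationInvariantOn

theorem IsQuadratic.isTranslationInvariantOn_span_singleton {E : Type*} [AddCommGroup E]
    [Module ℝ E] {q : E → ℝ} (hq : IsQuadratic q) {S : Set E} {w : E} {m M : ℝ}
    (hqS : MapsTo q S (Icc m M)) (hw : ∀ x ∈ S, ∀ t : ℝ, 0 ≤ t → x + t • w ∈ S) :
    IsTranslationInvariantOn q S (ℝ ∙ w) := by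
  intro x hx u hu
  obtain ⟨s, rfl⟩ := Submodule.mem_span_singleton.mp hu
  exact hq.add_smul_eq_of_mapsTo_Icc (fun t ht => hqS (hw x hx t ht)) s

section ClosureAddSubmodule

variable {E : Type*} [AddCommGroup E] [Module ℝ E] [TopologicalSpace E] {S : Set E}
  {V : Submodule ℝ E}

theorem subset_closure_add_submodule : S ⊆ closure (S + (V : Set E)) :=
  (subset_add_left S V.zero_mem).trans subset_closure

theorem add_mem_closure_add_submodule [ContinuousAdd E] {x v : E}
    (hx : x ∈ closure (S + (V : Set E))) (hv : v ∈ V) : x + v ∈ closure (S + (V : Set E)) :=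
  map_mem_closure (f := (· + v)) (continuous_add_const v) hx <| by
    rintro _ ⟨y, hy, u, hu, rfl⟩
    exact ⟨y, hy, u + v, V.add_mem hu hv, (add_assoc y u v).symm⟩

end ClosureAddSubmodule

section Recession

variable {E : Type*} [NormedAddCommGroup E] [NormedSpace ℝ E]

theorem IsClosed.add_smul_mem_of_tendsto {C : Set E} (hcl : IsClosed C) (hconv : Convex ℝ C)
    {z : ℕ → E} (hz : ∀ j, z j ∈ C) (hnorm : Tendsto (‖z ·‖) atTop atTop) {w : E}
    (hw : Tendsto (fun j => ‖z j‖⁻¹ • z j) atTop (𝓝 w)) {x : E} (hx : x ∈ C) {t : ℝ}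
    (ht : 0 ≤ t) : x + t • w ∈ C := by
  have hlim : Tendsto (fun j => x + (t * ‖z j‖⁻¹) • (z j - x)) atTop (𝓝 (x + t • w)) := by
    have h := (tendsto_const_nhds (x := x)).add (hw.const_smul t) |>.sub
      ((hnorm.inv_tendsto_atTop.const_mul t).smul_const x)
    simp only [mul_zero, zero_smul, sub_zero] at h
    refine h.congr fun j => ?_
    simp only [smul_sub, smul_smul]
    module
  refine hcl.mem_of_tendsto hlim ?_
  filter_upwards [hnorm.eventually_ge_atTop (max t 1)] with j hj
  have hpos : 0 < ‖z j‖ := by linarith [le_max_right t 1]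
  refine hconv.add_smul_sub_mem hx (hz j) ⟨by positivity, ?_⟩
  rw [mul_inv_le_iff₀ hpos, one_mul]
  exact (le_max_left t 1).trans hj

end Recession

section MinNorm

variable {E : Type*} [NormedAddCommGroup E] [InnerProductSpace ℝ E]

theorem exists_forall_norm_le_and_inner_eq_zero [CompleteSpace E] {K : Set E}
    (hne : K.Nonempty) (hcl : IsClosed K) (hconv : Convex ℝ K) {V : Submodule ℝ E}
    (hV : ∀ x ∈ K, ∀ v ∈ V, x + v ∈ K) :
    ∃ x ∈ K, (∀ y ∈ K, ‖x‖ ≤ ‖y‖) ∧ ∀ v ∈ V, ⟪x, v⟫_ℝ = 0 := by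
  obtain ⟨x, hxK, hx⟩ := exists_norm_eq_iInf_of_complete_convex hne hcl.isComplete hconv 0
  have hobtuse := (norm_eq_iInf_iff_real_inner_le_zero hconv hxK).mp hx
  refine ⟨x, hxK, fun y hy => ?_, fun v hv => ?_⟩
  · have h := hobtuse y hy
    simp only [zero_sub, inner_neg_left, inner_sub_right, real_inner_self_eq_norm_sq] at h
    nlinarith [real_inner_le_norm x y, norm_nonneg x, norm_nonneg y]
  · have h₁ := hobtuse (x + v) (hV x hxK v hv)
    have h₂ := hobtuse (x + -v) (hV x hxK _ (V.neg_mem hv))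
    simp only [zero_sub, add_sub_cancel_left, inner_neg_left, inner_neg_right] at h₁ h₂
    linarith

end MinNorm

theorem exists_mem_iInter_or_exists_recession {E : Type*} [NormedAddCommGroup E]
    [InnerProductSpace ℝ E] [FiniteDimensional ℝ E] {D : ℕ → Set E} {V : Submodule ℝ E}
    (hanti : Antitone D) (hne : ∀ k, (D k).Nonempty) (hcl : ∀ k, IsClosed (D k))
    (hconv : ∀ k, Convex ℝ (D k)) (hV : ∀ k, ∀ x ∈ D k, ∀ v ∈ V, x + v ∈ D k) :
    (⋂ k, D k).Nonempty ∨ ∃ w ∉ V, ∀ x ∈ D 0, ∀ t : ℝ, 0 ≤ t → x + t • w ∈ D 0 := by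
  choose z hzD hzmin hzperp using fun k =>
    exists_forall_norm_le_and_inner_eq_zero (hne k) (hcl k) (hconv k) (hV k)
  by_cases hbdd : BddAbove (range (‖z ·‖))
  · left
    obtain ⟨R, hR⟩ := hbdd
    obtain ⟨x, -, φ, hφ, hlim⟩ := tendsto_subseq_of_bounded (Metric.isBounded_closedBall
      (x := 0) (r := R)) fun k => mem_closedBall_zero_iff.mpr (hR (mem_range_self k))
    refine ⟨x, mem_iInter.mpr fun k => (hcl k).mem_of_tendsto hlim ?_⟩
    filter_upwards [eventually_ge_atTop k] with j hj
    exact hanti (hj.trans hφ.le_apply) (hzD (φ j))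
  · right
    have htend : Tendsto (‖z ·‖) atTop atTop :=
      tendsto_atTop_atTop_of_monotone' (fun k k' hk => hzmin k _ (hanti hk (hzD k'))) hbdd
    have hsphere : ∀ᶠ k in atTop, ‖z k‖⁻¹ • z k ∈ Metric.sphere (0 : E) 1 := by
      filter_upwards [htend.eventually_gt_atTop 0] with k hk
      simp [norm_smul, hk.ne']
    obtain ⟨w, hw, φ, hφ, hlim⟩ := (isCompact_sphere (0 : E) 1).tendsto_subseq' hsphere.frequently
    refine ⟨w, fun hwV => ?_, fun x hx t ht => (hcl 0).add_smul_mem_of_tendsto (hconv 0)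
      (fun j => hanti (Nat.zero_le _) (hzD (φ j))) (htend.comp hφ.tendsto_atTop) hlim hx ht⟩
    have hinner : Tendsto (fun j => ⟪‖z (φ j)‖⁻¹ • z (φ j), w⟫_ℝ) atTop (𝓝 ⟪w, w⟫_ℝ) :=
      hlim.inner tendsto_const_nhds
    simp only [real_inner_smul_left, hzperp _ w hwV, mul_zero] at hinner
    have hw0 : w = 0 := inner_self_eq_zero.mp (tendsto_nhds_unique tendsto_const_nhds hinner).symm
    simp [hw0] at hw

theorem Antitone.exists_mem_iInter_closure_add_or_exists_recession {E : Type*}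
    [NormedAddCommGroup E] [InnerProductSpace ℝ E] [FiniteDimensional ℝ E] {C : ℕ → Set E}
    (hanti : Antitone C) (hne : ∀ k, (C k).Nonempty) (hconv : ∀ k, Convex ℝ (C k))
    (V : Submodule ℝ E) :
    (⋂ k, closure (C k + (V : Set E))).Nonempty ∨ ∃ w ∉ V, ∀ x ∈ closure (C 0 + (V : Set E)),
      ∀ t : ℝ, 0 ≤ t → x + t • w ∈ closure (C 0 + (V : Set E)) :=
  exists_mem_iInter_or_exists_recession
    (fun _ _ hk => closure_mono (add_subset_add_right (hanti hk)))
    (fun k => (hne k).mono subset_closure_add_submodule) (fun _ => isClosed_closure)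
    (fun k => ((hconv k).add V.convex).closure)
    fun _ _ hx _ hv => add_mem_closure_add_submodule hx hv

theorem isFAsymptote_mk' {E : Type*} [NormedAddCommGroup E] [NormedSpace ℝ E] {F : Set E}
    {V : Submodule ℝ E} {x : E} (hx : x ∈ closure (F + (V : Set E)))
    (hFM : F ∩ AffineSubspace.mk' x V = ∅) : IsFAsymptote (AffineSubspace.mk' x V) F := by
  refine ⟨⟨x, AffineSubspace.self_mem_mk' x V⟩, hFM, fun ε hε => ?_⟩
  obtain ⟨_, ⟨y, hy, v, hv, rfl⟩, hdist⟩ := Metric.mem_closure_iff.mp hx ε hε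
  refine ⟨y, hy, x - v, AffineSubspace.mem_mk'.mpr ?_, ?_⟩
  · simpa using V.neg_mem hv
  · rwa [← dist_add_right y _ v, sub_add_cancel, dist_comm]

theorem isClosed_add_submodule_of_forall_not_isFAsymptote {E : Type*} [NormedAddCommGroup E]
    [NormedSpace ℝ E] {F : Set E} (hasym : ∀ M : AffineSubspace ℝ E, ¬ IsFAsymptote M F)
    (V : Submodule ℝ E) : IsClosed (F + (V : Set E)) := by
  refine closure_subset_iff_isClosed.mp fun x hx => of_not_not fun hxFV => hasym _ <|
    isFAsymptote_mk' hx <| eq_empty_of_forall_notMem fun y ⟨hy, hyM⟩ => hxFV ?_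
  refine ⟨y, hy, x - y, ?_, add_sub_cancel y x⟩
  simpa using V.neg_mem (AffineSubspace.mem_mk'.mp hyM)

theorem nonempty_sep_le_sInf_add {α : Type*} {F : Set α} (hne : F.Nonempty) (f : α → ℝ) {ε : ℝ}
    (hε : 0 < ε) : {x ∈ F | f x ≤ sInf (f '' F) + ε}.Nonempty := by
  obtain ⟨_, ⟨x, hx, rfl⟩, hlt⟩ := exists_lt_of_csInf_lt (hne.image f) (lt_add_of_pos_right _ hε)
  exact ⟨x, hx, hlt.le⟩

theorem quasiconvex_quadratic_attains_inf_general {n : ℕ}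
    (F : Set (EuclideanSpace ℝ (Fin n))) (hne : F.Nonempty)
    (hasym : ∀ M : AffineSubspace ℝ (EuclideanSpace ℝ (Fin n)), ¬ IsFAsymptote M F)
    (q : EuclideanSpace ℝ (Fin n) → ℝ) (hq : IsQuadratic q)
    (hqc : ∀ α : ℝ, Convex ℝ {x ∈ F | q x ≤ α})
    (hbdd : BddBelow (q '' F)) :
    ∃ x₀ ∈ F, ∀ x ∈ F, q x₀ ≤ q x := by
  set μ := sInf (q '' F)
  have hμ : ∀ x ∈ F, μ ≤ q x := fun x hx => csInf_le hbdd (mem_image_of_mem q hx)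
  set C : ℕ → Set (EuclideanSpace ℝ (Fin n)) := fun k => {x ∈ F | q x ≤ μ + 1 / (k + 1)}
  have hCanti : Antitone C := fun k k' hk x hx => ⟨hx.1, hx.2.trans (by gcongr)⟩
  obtain ⟨V, hVinv, hVmax⟩ := wellFounded_gt.has_min {V | IsTranslationInvariantOn q (C 0) V}
    ⟨⊥, fun x _ v hv => by rw [(Submodule.mem_bot ℝ).mp hv, add_zero]⟩
  have hqD : ∀ k, MapsTo q (closure (C k + (V : Set _))) (Icc μ (μ + 1 / (k + 1))) := fun k =>
    MapsTo.closure_left ((hVinv.mono (hCanti k.zero_le)).mapsTo_add_submodule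
      fun x hx => ⟨hμ x hx.1, hx.2⟩) hq.continuous isClosed_Icc
  have hVD : IsTranslationInvariantOn q (closure (C 0 + (V : Set _))) V :=
    hVinv.add_submodule.closure hq.continuous
  rcases hCanti.exists_mem_iInter_closure_add_or_exists_recession
    (fun k => nonempty_sep_le_sInf_add hne q Nat.one_div_pos_of_nat) (fun _ => hqc _) V
    with ⟨x, hx⟩ | ⟨w, hwV, hw⟩
  · rw [mem_iInter] at hx
    obtain ⟨y, hyF, v, hv, rfl⟩ := (isClosed_add_submodule_of_forall_not_isFAsymptote hasym V
      ).closure_subset (closure_mono (add_subset_add_right (sep_subset F _)) (hx 0))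
    have hqy : q y = q (y + v) := by simpa using hVD _ (hx 0) (-v) (V.neg_mem hv)
    refine ⟨y, hyF, fun z hz => le_trans ?_ (hμ z hz)⟩
    refine hqy ▸ ge_of_tendsto' (x := atTop) ?_ fun k => (hqD k (hx k)).2
    simpa using tendsto_const_nhds.add (tendsto_one_div_add_atTop_nhds_zero_nat (𝕜 := ℝ))
  · have hinv : IsTranslationInvariantOn q (C 0) (V ⊔ ℝ ∙ w) :=
      (hVD.sup (hq.isTranslationInvariantOn_span_singleton (hqD 0) hw)
        fun _ hx _ hv => add_mem_closure_add_submodule hx hv).mono subset_closure_add_submodule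
    exact absurd (Submodule.lt_sup_iff_notMem.mpr hwV) (hVmax _ hinv)

theorem quasiconvex_quadratic_attains_inf {n : ℕ}
    (F : Set (EuclideanSpace ℝ (Fin n))) (hne : F.Nonempty)
    (hconv : Convex ℝ F) (hcl : IsClosed F)
    (hasym : ∀ M : AffineSubspace ℝ (EuclideanSpace ℝ (Fin n)), ¬ IsFAsymptote M F)
    (q : EuclideanSpace ℝ (Fin n) → ℝ) (hq : IsQuadratic q)
    (hqc : ∀ α : ℝ, Convex ℝ {x ∈ F | q x ≤ α})
    (hbdd : BddBelow (q '' F)) :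
    ∃ x₀ ∈ F, ∀ x ∈ F, q x₀ ≤ q x :=
  quasiconvex_quadratic_attains_inf_general F hne hasym q hq hqc hbdd
end
end

section
/- For a closed convex set F and a linear subspace L, the following are equivalent: (1) no translate of L is an f-asymptote of F; (2) the orthogonal projection of F onto L^⊥ is closed; (3) F + L is closed. -/
open Pointwise

noncomputable section

/-!
The translate `v + L` meets `F` exactly when `v ∈ F + L`, and its distance to `F` is the
distance from `v` to `F + L`; so `v + L` is an f-asymptote exactly when
`v ∈ closure (F + L) \ (F + L)`, and no translate is one iff `F + L` is closed.
For the projection `π` onto `Lᗮ`, whose kernel is `L`, one has `F + L = π ⁻¹' (π '' F)`,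
and `π '' F` is recovered from it by intersecting with the closed set of fixed points of `π`.
-/

theorem AffineSubspace.inter_mk'_eq_empty_iff {k V : Type*} [Ring k] [AddCommGroup V]
    [Module k V] (F : Set V) (L : Submodule k V) (v : V) :
    F ∩ (AffineSubspace.mk' v L : Set V) = ∅ ↔ v ∉ F + (L : Set V) := by
  rw [Set.eq_empty_iff_forall_notMem, Set.mem_add]
  simp only [Set.mem_inter_iff, SetLike.mem_coe, AffineSubspace.mem_mk', vsub_eq_sub]
  constructor
  · rintro h ⟨f, hf, l, hl, rfl⟩
    exact h f ⟨hf, by simpa using L.neg_mem hl⟩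
  · rintro h f ⟨hf, hfv⟩
    exact h ⟨f, hf, v - f, by simpa using L.neg_mem hfv, by abel⟩

theorem AffineSubspace.exists_dist_mk'_lt_iff_mem_closure {V : Type*} [SeminormedAddCommGroup V]
    [Module ℝ V] (F : Set V) (L : Submodule ℝ V) (v : V) :
    (∀ ε : ℝ, 0 < ε → ∃ x ∈ F, ∃ y ∈ (AffineSubspace.mk' v L : Set V), dist x y < ε) ↔
      v ∈ closure (F + (L : Set V)) := by
  rw [Metric.mem_closure_iff]
  simp only [SetLike.mem_coe, AffineSubspace.mem_mk', vsub_eq_sub]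
  refine forall₂_congr fun ε _ => ⟨?_, ?_⟩
  · rintro ⟨x, hx, y, hy, hxy⟩
    refine ⟨x + (v - y), Set.add_mem_add hx (by simpa using L.neg_mem hy), ?_⟩
    rwa [dist_eq_norm, show v - (x + (v - y)) = y - x by abel, ← dist_eq_norm, dist_comm]
  · rintro ⟨_, ⟨f, hf, l, hl, rfl⟩, hdist⟩
    refine ⟨f, hf, v - l, by simpa using L.neg_mem hl, ?_⟩
    rwa [dist_eq_norm, show f - (v - l) = f + l - v by abel, ← dist_eq_norm, dist_comm]

theorem isFAsymptote_mk'_iff {E : Type*} [NormedAddCommGroup E] [NormedSpace ℝ E]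
    (F : Set E) (L : Submodule ℝ E) (v : E) :
    IsFAsymptote (AffineSubspace.mk' v L) F ↔ v ∈ closure (F + (L : Set E)) \ (F + L) := by
  rw [IsFAsymptote, AffineSubspace.inter_mk'_eq_empty_iff,
    AffineSubspace.exists_dist_mk'_lt_iff_mem_closure, Set.mem_sdiff, and_comm (a := v ∉ _),
    and_iff_right ⟨v, AffineSubspace.self_mem_mk' v L⟩]

theorem forall_not_isFAsymptote_mk'_iff_isClosed_add {E : Type*} [NormedAddCommGroup E]
    [NormedSpace ℝ E] (F : Set E) (L : Submodule ℝ E) :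
    (∀ v, ¬ IsFAsymptote (AffineSubspace.mk' v L) F) ↔ IsClosed (F + (L : Set E)) := by
  simp only [isFAsymptote_mk'_iff, Set.mem_sdiff, not_and_not_right]
  exact closure_subset_iff_isClosed

theorem LinearMap.preimage_image_eq_add_ker {R M N : Type*} [Ring R] [AddCommGroup M]
    [AddCommGroup N] [Module R M] [Module R N] (f : M →ₗ[R] N) (F : Set M) :
    f ⁻¹' (f '' F) = F + (LinearMap.ker f : Set M) := by
  ext x
  simp only [Set.mem_preimage, Set.mem_image, Set.mem_add, SetLike.mem_coe, LinearMap.mem_ker]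
  refine ⟨fun ⟨y, hy, hfy⟩ => ⟨y, hy, x - y, by simp [hfy], by abel⟩, ?_⟩
  rintro ⟨y, hy, z, hz, rfl⟩
  exact ⟨y, hy, by simp [hz]⟩

theorem ContinuousLinearMap.isClosed_image_iff_isClosed_add_ker {R E : Type*} [Ring R]
    [AddCommGroup E] [Module R E] [TopologicalSpace E] [T2Space E] {p : E →L[R] E}
    (hp : IsIdempotentElem p) (F : Set E) :
    IsClosed (p '' F) ↔ IsClosed (F + (p.ker : Set E)) := by
  have hfix : ∀ x, p (p x) = p x := fun x => congrArg (· x) hp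
  rw [← LinearMap.preimage_image_eq_add_ker]
  refine ⟨fun h => h.preimage p.continuous, fun h => ?_⟩
  have hrange : p '' F = {x | p x = x} ∩ p ⁻¹' (p '' F) := by
    ext y
    refine ⟨?_, fun ⟨hy, hpy⟩ => hy ▸ hpy⟩
    rintro ⟨x, hx, rfl⟩
    exact ⟨hfix x, x, hx, (hfix x).symm⟩
  rw [hrange]
  exact (isClosed_eq p.continuous continuous_id).inter h

theorem Submodule.isClosed_starProjection_orthogonal_image_iff {𝕜 E : Type*} [RCLike 𝕜]
    [NormedAddCommGroup E] [InnerProductSpace 𝕜 E] (L : Submodule 𝕜 E)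
    [L.HasOrthogonalProjection] (F : Set E) :
    IsClosed (Lᗮ.starProjection '' F) ↔ IsClosed (F + (L : Set E)) := by
  rw [ContinuousLinearMap.isClosed_image_iff_isClosed_add_ker Lᗮ.isIdempotentElem_starProjection,
    Submodule.ker_starProjection, Submodule.orthogonal_orthogonal]

theorem no_translate_asymptote_iff_proj_closed_iff_sum_closed_general {n : ℕ}
    (F : Set (EuclideanSpace ℝ (Fin n)))
    (L : Submodule ℝ (EuclideanSpace ℝ (Fin n))) :
    ((∀ v : EuclideanSpace ℝ (Fin n), ¬ IsFAsymptote (AffineSubspace.mk' v L) F) ↔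
      IsClosed ((fun x => (Submodule.orthogonalProjection Lᗮ x : EuclideanSpace ℝ (Fin n))) '' F)) ∧
    (IsClosed ((fun x => (Submodule.orthogonalProjection Lᗮ x : EuclideanSpace ℝ (Fin n))) '' F) ↔
      IsClosed (F + (L : Set (EuclideanSpace ℝ (Fin n))))) := by
  have hproj := L.isClosed_starProjection_orthogonal_image_iff F
  exact ⟨(forall_not_isFAsymptote_mk'_iff_isClosed_add F L).trans hproj.symm, hproj⟩

theorem no_translate_asymptote_iff_proj_closed_iff_sum_closed {n : ℕ}
    (F : Set (EuclideanSpace ℝ (Fin n))) (hcl : IsClosed F) (hconv : Convex ℝ F)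
    (L : Submodule ℝ (EuclideanSpace ℝ (Fin n))) :
    ((∀ v : EuclideanSpace ℝ (Fin n), ¬ IsFAsymptote (AffineSubspace.mk' v L) F) ↔
      IsClosed ((fun x => (Submodule.orthogonalProjection Lᗮ x : EuclideanSpace ℝ (Fin n))) '' F)) ∧
    (IsClosed ((fun x => (Submodule.orthogonalProjection Lᗮ x : EuclideanSpace ℝ (Fin n))) '' F) ↔
      IsClosed (F + (L : Set (EuclideanSpace ℝ (Fin n))))) :=
  no_translate_asymptote_iff_proj_closed_iff_sum_closed_general F L
end
end

section
/- Let D be a polyhedral convex cone with xᵀGx ≥ 0 for all x ∈ D, where G is symmetric. Then the domain of f(c) = inf_{x∈D} (cᵀx + ½xᵀGx) equals {c : cᵀx ≥ 0 for every x ∈ D with xᵀGx = 0}, and this domain is a polyhedral convex cone. -/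
open Matrix

noncomputable section

/-- A polyhedral (finitely generated) convex cone. -/
def IsPolyhedralCone {E : Type*} [AddCommGroup E] [Module ℝ E] (D : Set E) : Prop :=
  ∃ (m : ℕ) (v : Fin m → E),
    D = {x | ∃ c : Fin m → ℝ, (∀ i, 0 ≤ c i) ∧ x = ∑ i, c i • v i}

/-!
Write `D` as the image of the orthant under the matrix `V` of its generators, so that the problem
becomes one about the copositive matrix `H = Vᵀ G V` on the orthant.

The equality of the two sets is the Frank–Wolfe theorem for copositive forms. If the form has a
nonzero zero `y` on a face of the orthant, then moving from any point `t` against `y` until a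
coordinate vanishes does not increase `b ⬝ᵥ t + ½ tᵀHt`, so the bound comes from the smaller faces;
otherwise the form is bounded below by `δ (∑ tᵢ)²` on the face, by compactness of the simplex.

For polyhedrality, the zeros of a copositive form on the orthant are the solutions of the linear
complementarity system `t ≥ 0`, `H t ≥ 0`, `tᵢ (H t)ᵢ = 0`, a finite union of polyhedral cones.
The domain is the dual of their image, an intersection of finitely many halfspaces, and such a
cone is finitely generated by Weyl's theorem, proved by Fourier–Motzkin elimination.
-/

open Set

namespace PointedCone

variable {𝕜 E M : Type*} [Field 𝕜] [AddCommGroup E] [Module 𝕜 E] [AddCommGroup M] [Module 𝕜 M]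

def wedge (φ : E →ₗ[𝕜] 𝕜) : E →ₗ[𝕜] E →ₗ[𝕜] E :=
  LinearMap.mk₂ 𝕜 (fun u w => φ u • w - φ w • u)
    (by intros; simp only [map_add, add_smul, smul_add]; abel)
    (by intros; simp only [map_smul, smul_eq_mul, mul_smul, smul_sub, smul_comm (φ _)])
    (by intros; simp only [map_add, add_smul, smul_add]; abel)
    (by intros; simp only [map_smul, smul_eq_mul, mul_smul, smul_sub, smul_comm (φ _)])

lemma wedge_apply (φ : E →ₗ[𝕜] 𝕜) (u w : E) : wedge φ u w = φ u • w - φ w • u := rfl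

variable [LinearOrder 𝕜] [IsStrictOrderedRing 𝕜]

lemma mem_hull_range_iff {ι : Type*} [Fintype ι] {v : ι → E} {x : E} :
    x ∈ hull 𝕜 (range v) ↔ ∃ c : ι → 𝕜, (∀ i, 0 ≤ c i) ∧ x = ∑ i, c i • v i := by
  rw [Submodule.mem_span_range_iff_exists_fun]
  constructor
  · rintro ⟨c, rfl⟩
    exact ⟨fun i => c i, fun i => (c i).2, by simp⟩
  · rintro ⟨c, hc, rfl⟩
    exact ⟨fun i => ⟨c i, hc i⟩, by simp⟩

lemma eq_zero_of_mem_hull_of_nonneg {φ : E →ₗ[𝕜] 𝕜} {s : Set E} (hs : ∀ w ∈ s, φ w < 0)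
    {q : E} (hq : q ∈ hull 𝕜 s) (hφq : 0 ≤ φ q) : q = 0 := by
  suffices q = 0 ∨ φ q < 0 from this.resolve_right hφq.not_gt
  clear hφq
  induction hq using Submodule.span_induction with
  | mem w hw => exact .inr (hs w hw)
  | zero => exact .inl rfl
  | add x y _ _ hx hy =>
    rcases hx with rfl | hx <;> rcases hy with rfl | hy <;> simp_all [add_neg]
  | smul r x _ hx =>
    rcases hx with rfl | hx
    · simp
    rcases eq_zero_or_pos r with rfl | hr
    · simp
    · right
      rw [← Nonneg.coe_smul, map_smul, smul_eq_mul]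
      exact mul_neg_of_pos_of_neg hr hx

lemma wedge_mem_hull_image2 (φ : E →ₗ[𝕜] 𝕜) {s t : Set E} {u w : E} (hu : u ∈ hull 𝕜 s)
    (hw : w ∈ hull 𝕜 t) : wedge φ u w ∈ hull 𝕜 (image2 (wedge φ · ·) s t) :=
  (Submodule.map₂_span_span {c : 𝕜 // 0 ≤ c}
    ((wedge φ).restrictScalars₁₂ {c : 𝕜 // 0 ≤ c} {c : 𝕜 // 0 ≤ c}) s t).le
    (Submodule.apply_mem_map₂ _ hu hw)

/-- `y + q = (1 + φ q / φ y) • y + (φ y)⁻¹ • wedge φ y q`; if `φ y = 0`, then `q = 0`. -/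
lemma add_mem_hull_union_wedge {φ : E →ₗ[𝕜] 𝕜} {P N : Set E} (hP : ∀ u ∈ P, 0 ≤ φ u)
    (hN : ∀ w ∈ N, φ w < 0) {y q : E} (hy : y ∈ hull 𝕜 P) (hq : q ∈ hull 𝕜 N)
    (hyq : 0 ≤ φ (y + q)) : y + q ∈ hull 𝕜 (P ∪ image2 (wedge φ · ·) P N) := by
  have hφy : 0 ≤ φ y := (Submodule.span_le (p := (positive 𝕜 𝕜).comap φ)).2 hP hy
  rcases hφy.eq_or_lt with hy0 | hy0
  · obtain rfl : q = 0 := eq_zero_of_mem_hull_of_nonneg hN hq (by simpa [← hy0] using hyq)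
    simpa using Submodule.span_mono subset_union_left hy
  · have hcoef : 0 ≤ 1 + φ q / φ y := by
      rw [one_add_div hy0.ne']
      exact div_nonneg (by simpa using hyq) hy0.le
    have hsum : y + q = (1 + φ q / φ y) • y + (φ y)⁻¹ • wedge φ y q := by
      rw [wedge_apply, smul_sub, smul_smul, smul_smul, inv_mul_cancel₀ hy0.ne']
      module
    rw [hsum]
    exact add_mem (smul_mem _ hcoef (Submodule.span_mono subset_union_left hy))
      (smul_mem _ (inv_nonneg.2 hy0.le)
        (Submodule.span_mono subset_union_right (wedge_mem_hull_image2 φ hy hq)))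

/-- Fourier–Motzkin elimination: cutting `hull 𝕜 s` by `0 ≤ φ` leaves the cone generated by the
generators with `0 ≤ φ` and the combinations `wedge φ u w` of one generator from each side. -/
lemma FG.inf_comap_positive {C : PointedCone 𝕜 E} (hC : C.FG) (φ : E →ₗ[𝕜] 𝕜) :
    (C ⊓ (positive 𝕜 𝕜).comap φ).FG := by
  obtain ⟨s, rfl⟩ := hC
  set P := {u ∈ (s : Set E) | 0 ≤ φ u}
  set N := {w ∈ (s : Set E) | φ w < 0}
  suffices h : hull 𝕜 s ⊓ (positive 𝕜 𝕜).comap φ = hull 𝕜 (P ∪ image2 (wedge φ · ·) P N) by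
    rw [h]
    exact Submodule.fg_span ((s.finite_toSet.sep _).union
      ((s.finite_toSet.sep _).image2 _ (s.finite_toSet.sep _)))
  apply le_antisymm
  · rintro x ⟨hx, hφx⟩
    have hPN : (s : Set E) = P ∪ N := by
      ext u
      rcases le_or_gt 0 (φ u) with h | h
      · simp [P, N, h, h.not_gt]
      · simp [P, N, h, h.not_ge]
    rw [hPN] at hx
    obtain ⟨y, hy, q, hq, rfl⟩ := Submodule.mem_sup.1 ((Submodule.span_union P N).le hx)
    exact add_mem_hull_union_wedge (fun u hu => hu.2) (fun w hw => hw.2) hy hq hφx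
  · refine Submodule.span_le.2 ?_
    rintro z (⟨hzs, hz⟩ | ⟨u, ⟨hus, hu⟩, w, ⟨hws, hw⟩, rfl⟩)
    · exact ⟨subset_hull hzs, hz⟩
    · dsimp only
      refine ⟨?_, ?_⟩
      · rw [SetLike.mem_coe, wedge_apply, sub_eq_add_neg, ← neg_smul]
        exact add_mem (smul_mem _ hu (subset_hull hws))
          (smul_mem _ (neg_nonneg.2 hw.le) (subset_hull hus))
      · simp [wedge_apply, mul_comm]

lemma fg_top [Module.Finite 𝕜 E] : (⊤ : PointedCone 𝕜 E).FG := by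
  let b := Module.finBasis 𝕜 E
  refine Submodule.fg_def.2 ⟨range b ∪ range (-b ·), (finite_range _).union (finite_range _),
    eq_top_iff.2 fun x _ => ?_⟩
  rw [← b.sum_repr x]
  refine Submodule.sum_mem _ fun i _ => ?_
  rcases le_or_gt 0 (b.repr x i) with h | h
  · exact smul_mem _ h (subset_hull (.inl ⟨i, rfl⟩))
  · rw [← neg_neg (b.repr x i), neg_smul, ← smul_neg]
    exact smul_mem _ (neg_nonneg.2 h.le) (subset_hull (.inr ⟨i, rfl⟩))

/-- **Weyl's theorem**, by Fourier–Motzkin elimination of one halfspace at a time. -/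
lemma DualFG.fg [Module.Finite 𝕜 E] {p : M →ₗ[𝕜] E →ₗ[𝕜] 𝕜} {C : PointedCone 𝕜 E}
    (hC : C.DualFG p) : C.FG := by
  classical
  obtain ⟨s, rfl⟩ := hC
  induction s using Finset.induction_on with
  | empty => simpa using fg_top
  | insert f s _ ih =>
    rw [Finset.coe_insert, dual_insert, dual_singleton, inf_comm]
    exact FG.inf_comap_positive ih (p f)

lemma DualFG.comap {N : Type*} [AddCommGroup N] [Module 𝕜 N] {p : M →ₗ[𝕜] E →ₗ[𝕜] 𝕜}
    {C : PointedCone 𝕜 E} (hC : C.DualFG p) (L : N →ₗ[𝕜] E) :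
    (C.comap L).DualFG (p.compl₂ L) := by
  obtain ⟨s, rfl⟩ := hC
  exact ⟨s, by ext; simp⟩

lemma DualFG.dual_iUnion_of_fg {κ : Type*} [Finite κ] (p : M →ₗ[𝕜] E →ₗ[𝕜] 𝕜)
    {C : κ → PointedCone 𝕜 M} (hC : ∀ k, (C k).FG) : (dual p (⋃ k, (C k : Set M))).DualFG p := by
  choose s hs hsC using fun k => Submodule.fg_def.1 (hC k)
  have : dual p (⋃ k, (C k : Set M)) = dual p (⋃ k, s k) := by
    simp_rw [dual_iUnion, ← hsC, dual_hull]
  rw [this]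
  exact DualFG.dual_of_finite p (finite_iUnion hs)

end PointedCone

lemma isPolyhedralCone_iff_fg {E : Type*} [AddCommGroup E] [Module ℝ E] {D : Set E} :
    IsPolyhedralCone D ↔ ∃ C : PointedCone ℝ E, C.FG ∧ (C : Set E) = D := by
  simp_rw [Submodule.fg_iff_exists_fin_generating_family]
  constructor
  · rintro ⟨m, v, rfl⟩
    exact ⟨_, ⟨m, v, rfl⟩, by ext; exact PointedCone.mem_hull_range_iff⟩
  · rintro ⟨C, ⟨m, v, rfl⟩, rfl⟩
    exact ⟨m, v, by ext; exact PointedCone.mem_hull_range_iff⟩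

lemma IsPolyhedralCone.exists_eq_image_mulVec {n : ℕ} {D : Set (Fin n → ℝ)}
    (hD : IsPolyhedralCone D) :
    ∃ (m : ℕ) (V : Matrix (Fin n) (Fin m) ℝ), D = (V *ᵥ ·) '' Ici 0 := by
  obtain ⟨m, v, rfl⟩ := hD
  refine ⟨m, Matrix.of fun k i => v i k, ?_⟩
  have (c : Fin m → ℝ) : (Matrix.of fun k i => v i k) *ᵥ c = ∑ i, c i • v i := by
    ext k; simp [mulVec, dotProduct, mul_comm]
  ext x
  simp [this, eq_comm, Pi.le_def]

section Orthant

variable {ι : Type*}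

def orthantFace (s : Finset ι) : Set (ι → ℝ) := {t | 0 ≤ t ∧ ∀ i ∉ s, t i = 0}

lemma orthantFace_univ [Fintype ι] : orthantFace (Finset.univ : Finset ι) = Ici 0 := by
  ext t; simp [orthantFace]

lemma isClosed_orthantFace (s : Finset ι) : IsClosed (orthantFace s) := by
  have : orthantFace s = Ici 0 ∩ ⋂ i, ⋂ (_ : i ∉ s), {t | t i = 0} := by
    ext; simp [orthantFace]
  rw [this]
  exact isClosed_Ici.inter (isClosed_iInter fun i => isClosed_iInter fun _ =>
    isClosed_eq (continuous_apply i) continuous_const)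

lemma exists_sub_smul_nonneg_eq_zero [Fintype ι] {t y : ι → ℝ} (ht : 0 ≤ t) (hy : 0 ≤ y)
    (hy0 : y ≠ 0) : ∃ r : ℝ, 0 ≤ r ∧ ∃ i, 0 < y i ∧ 0 ≤ t - r • y ∧ (t - r • y) i = 0 := by
  have hpos : (Finset.univ.filter (0 < y ·)).Nonempty := by
    obtain ⟨i, hi⟩ := Function.ne_iff.1 hy0
    exact ⟨i, by simpa using (hy i).lt_of_ne' hi⟩
  obtain ⟨i, hi, hmin⟩ := Finset.exists_min_image _ (fun j => t j / y j) hpos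
  have hyi : 0 < y i := (Finset.mem_filter.1 hi).2
  refine ⟨t i / y i, div_nonneg (ht i) hyi.le, i, hyi, fun j => ?_, by simp [hyi.ne']⟩
  simp only [Pi.zero_apply, Pi.sub_apply, Pi.smul_apply, smul_eq_mul, sub_nonneg]
  rcases (hy j).eq_or_lt with hyj | hyj
  · simpa [← hyj] using ht j
  · have := hmin j (by simpa using hyj)
    rwa [le_div_iff₀ hyj] at this

end Orthant

namespace Matrix

variable {ι : Type*} [Fintype ι] {H : Matrix ι ι ℝ} {b : ι → ℝ}

def Copositive (H : Matrix ι ι ℝ) : Prop := ∀ t : ι → ℝ, 0 ≤ t → 0 ≤ t ⬝ᵥ H *ᵥ t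

lemma IsSymm.dotProduct_mulVec_comm (hH : H.IsSymm) (x y : ι → ℝ) :
    x ⬝ᵥ H *ᵥ y = y ⬝ᵥ H *ᵥ x := by
  rw [dotProduct_mulVec, ← mulVec_transpose, hH.eq, dotProduct_comm]

lemma IsSymm.quadratic_add_smul (hH : H.IsSymm) (x y : ι → ℝ) (r : ℝ) :
    (x + r • y) ⬝ᵥ H *ᵥ (x + r • y) =
      x ⬝ᵥ H *ᵥ x + 2 * r * (x ⬝ᵥ H *ᵥ y) + r ^ 2 * (y ⬝ᵥ H *ᵥ y) := by
  simp only [mulVec_add, mulVec_smul, dotProduct_add, add_dotProduct, dotProduct_smul,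
    smul_dotProduct, smul_eq_mul, hH.dotProduct_mulVec_comm y x]
  ring

/-- Compactness of the simplex makes the form at least `δ (∑ tᵢ)²` on the cone for some `δ > 0`,
which beats the linear part. -/
lemma bddBelow_quadratic_of_pos {F : Set (ι → ℝ)} (hF : IsClosed F) (hF0 : F ⊆ Ici 0)
    (hFsmul : ∀ r : ℝ, 0 ≤ r → ∀ t ∈ F, r • t ∈ F)
    (hpos : ∀ y ∈ F, y ≠ 0 → 0 < y ⬝ᵥ H *ᵥ y) :
    BddBelow ((fun t => b ⬝ᵥ t + 1 / 2 * (t ⬝ᵥ H *ᵥ t)) '' F) := by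
  have hK : IsCompact (F ∩ stdSimplex ℝ ι) := (isCompact_stdSimplex ℝ ι).inter_left hF
  obtain ⟨δ, hδ, hδK⟩ := hK.exists_forall_le' (a := 0)
    (f := fun y => y ⬝ᵥ H *ᵥ y) (by fun_prop) fun y hy => hpos y hy.1 (by
      rintro rfl; simpa using hy.2.2)
  obtain ⟨μ, hμ⟩ := hK.bddBelow_image (f := (b ⬝ᵥ ·)) (by fun_prop)
  refine ⟨-μ ^ 2 / (2 * δ), ?_⟩
  rintro _ ⟨t, ht, rfl⟩
  have ht0 : 0 ≤ t := hF0 ht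
  set σ := ∑ i, t i
  have hlin : σ * μ ≤ b ⬝ᵥ t ∧ σ ^ 2 * δ ≤ t ⬝ᵥ H *ᵥ t := by
    rcases (Finset.sum_nonneg fun i _ => ht0 i : 0 ≤ σ).eq_or_lt with hσ | hσ
    · obtain rfl : t = 0 := funext fun i =>
        (Finset.sum_eq_zero_iff_of_nonneg fun j _ => ht0 j).1 hσ.symm i (Finset.mem_univ i)
      simp [σ]
    · have hyK : σ⁻¹ • t ∈ F ∩ stdSimplex ℝ ι := by
        refine ⟨hFsmul _ (inv_nonneg.2 hσ.le) t ht, fun i => ?_, ?_⟩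
        · exact mul_nonneg (inv_nonneg.2 hσ.le) (ht0 i)
        · simpa [← Finset.mul_sum] using inv_mul_cancel₀ hσ.ne'
      have h1 : μ ≤ σ⁻¹ * (b ⬝ᵥ t) := by simpa using hμ ⟨_, hyK, rfl⟩
      have h2 : δ ≤ (σ ^ 2)⁻¹ * (t ⬝ᵥ H *ᵥ t) := by
        have := hδK _ hyK
        simp only [mulVec_smul, dotProduct_smul, smul_dotProduct, smul_eq_mul] at this
        linarith [show σ⁻¹ * (σ⁻¹ * (t ⬝ᵥ H *ᵥ t)) = (σ ^ 2)⁻¹ * (t ⬝ᵥ H *ᵥ t) by ring]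
      exact ⟨(le_inv_mul_iff₀ hσ).1 h1, (le_inv_mul_iff₀ (by positivity)).1 h2⟩
  have hsq : (σ * δ + μ) ^ 2 / (2 * δ) = σ * μ + 1 / 2 * (σ ^ 2 * δ) + μ ^ 2 / (2 * δ) := by
    field_simp; ring
  have : 0 ≤ (σ * δ + μ) ^ 2 / (2 * δ) := by positivity
  dsimp only
  rw [neg_div]
  linarith [hlin.1, hlin.2]

namespace Copositive

/-- A zero `y` of a copositive form minimises it on the orthant, so the derivative there,
`x ↦ 2 x ⬝ᵥ H *ᵥ y`, is nonnegative in every nonnegative direction. -/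
lemma dotProduct_mulVec_nonneg {y : ι → ℝ} (hc : H.Copositive) (hH : H.IsSymm) (hy : 0 ≤ y)
    (hz : y ⬝ᵥ H *ᵥ y = 0) {x : ι → ℝ} (hx : 0 ≤ x) : 0 ≤ x ⬝ᵥ H *ᵥ y := by
  by_contra! hneg
  set ε := -(x ⬝ᵥ H *ᵥ y) / (x ⬝ᵥ H *ᵥ x + 1)
  have hxx := hc x hx
  have hε : 0 < ε := div_pos (by linarith) (by linarith)
  have hεx : ε * (x ⬝ᵥ H *ᵥ x + 1) = -(x ⬝ᵥ H *ᵥ y) := div_mul_cancel₀ _ (by linarith)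
  have := hc (y + ε • x) (add_nonneg hy (smul_nonneg hε.le hx))
  rw [hH.quadratic_add_smul, hz, hH.dotProduct_mulVec_comm y x] at this
  nlinarith

lemma mulVec_nonneg {y : ι → ℝ} (hc : H.Copositive) (hH : H.IsSymm) (hy : 0 ≤ y)
    (hz : y ⬝ᵥ H *ᵥ y = 0) : 0 ≤ H *ᵥ y := by
  classical
  intro i
  simpa using hc.dotProduct_mulVec_nonneg hH hy hz
    (Pi.single_nonneg.2 (zero_le_one' ℝ) : 0 ≤ Pi.single i 1)

lemma dotProduct_mulVec_eq_zero_iff (hc : H.Copositive) (hH : H.IsSymm) {t : ι → ℝ}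
    (ht : 0 ≤ t) : t ⬝ᵥ H *ᵥ t = 0 ↔ 0 ≤ H *ᵥ t ∧ ∀ i, t i = 0 ∨ (H *ᵥ t) i = 0 := by
  constructor
  · intro hz
    have hHt := hc.mulVec_nonneg hH ht hz
    have := (Finset.sum_eq_zero_iff_of_nonneg fun i _ => mul_nonneg (ht i) (hHt i)).1 hz
    exact ⟨hHt, fun i => mul_eq_zero.1 (this i (Finset.mem_univ i))⟩
  · rintro ⟨-, h⟩
    exact Finset.sum_eq_zero fun i _ => by rcases h i with h | h <;> simp [h]

lemma quadratic_sub_smul_le (hc : H.Copositive) (hH : H.IsSymm) {t y : ι → ℝ} (ht : 0 ≤ t)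
    (hy : 0 ≤ y) (hz : y ⬝ᵥ H *ᵥ y = 0) (hby : 0 ≤ b ⬝ᵥ y) {r : ℝ} (hr : 0 ≤ r) :
    b ⬝ᵥ (t - r • y) + 1 / 2 * ((t - r • y) ⬝ᵥ H *ᵥ (t - r • y)) ≤
      b ⬝ᵥ t + 1 / 2 * (t ⬝ᵥ H *ᵥ t) := by
  have hty := hc.dotProduct_mulVec_nonneg hH hy hz ht
  rw [sub_eq_add_neg, ← neg_smul, hH.quadratic_add_smul, hz, dotProduct_add, dotProduct_smul,
    smul_eq_mul]
  nlinarith [mul_nonneg hr hby, mul_nonneg hr hty]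

/-- **Frank–Wolfe theorem** for copositive forms on the orthant, by induction on its faces. -/
theorem bddBelow_quadratic (hc : H.Copositive) (hH : H.IsSymm)
    (hb : ∀ t, 0 ≤ t → t ⬝ᵥ H *ᵥ t = 0 → 0 ≤ b ⬝ᵥ t) :
    BddBelow ((fun t => b ⬝ᵥ t + 1 / 2 * (t ⬝ᵥ H *ᵥ t)) '' Ici 0) := by
  classical
  rw [← orthantFace_univ]
  generalize (Finset.univ : Finset ι) = s
  induction s using Finset.strongInduction with | H s ih =>
  by_cases hzero : ∃ y ∈ orthantFace s, y ≠ 0 ∧ y ⬝ᵥ H *ᵥ y = 0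
  · obtain ⟨y, ⟨hy, hys⟩, hy0, hz⟩ := hzero
    obtain ⟨B, hB⟩ := (s.finite_toSet.bddBelow_biUnion).2 fun i hi => ih _ (s.erase_ssubset hi)
    refine ⟨B, ?_⟩
    rintro _ ⟨t, ⟨ht, hts⟩, rfl⟩
    obtain ⟨r, hr, i, hyi, hnonneg, hri⟩ := exists_sub_smul_nonneg_eq_zero ht hy hy0
    have hi : i ∈ s := by_contra fun hi => hyi.ne' (hys i hi)
    have hface : t - r • y ∈ orthantFace (s.erase i) := by
      refine ⟨hnonneg, fun j hj => ?_⟩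
      rcases eq_or_ne j i with rfl | hji
      · exact hri
      · have hjs : j ∉ s := fun h => hj (Finset.mem_erase.2 ⟨hji, h⟩)
        simp [hts j hjs, hys j hjs]
    exact (hB (mem_biUnion hi ⟨_, hface, rfl⟩)).trans
      (hc.quadratic_sub_smul_le hH ht hy hz (hb y hy hz) hr)
  · push Not at hzero
    exact bddBelow_quadratic_of_pos (isClosed_orthantFace s) (fun t ht => ht.1)
      (fun r hr t ht => ⟨smul_nonneg hr ht.1, fun i hi => by simp [ht.2 i hi]⟩)
      fun y hy hy0 => (hc y hy.1).lt_of_ne' (hzero y hy hy0)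

lemma bddBelow_quadratic_iff (hc : H.Copositive) (hH : H.IsSymm) (b : ι → ℝ) :
    BddBelow ((fun t => b ⬝ᵥ t + 1 / 2 * (t ⬝ᵥ H *ᵥ t)) '' Ici 0) ↔
      ∀ t, 0 ≤ t → t ⬝ᵥ H *ᵥ t = 0 → 0 ≤ b ⬝ᵥ t := by
  refine ⟨fun ⟨B, hB⟩ t ht hz => ?_, hc.bddBelow_quadratic hH⟩
  by_contra! hbt
  set k := (|B| + 1) / -(b ⬝ᵥ t)
  have hk : k * (b ⬝ᵥ t) = -(|B| + 1) := by
    simp only [k]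
    field_simp [hbt.ne]
  have := hB ⟨k • t, smul_nonneg (div_nonneg (by positivity) (by linarith)) ht, rfl⟩
  simp only [dotProduct_smul, mulVec_smul, smul_dotProduct, smul_eq_mul, hz, mul_zero,
    add_zero] at this
  linarith [neg_abs_le B]

/-- The inequalities `t ≥ 0`, `H t ≥ 0`, and `tᵢ ≤ 0` for `i ∈ S`, `(H t)ᵢ ≤ 0` for `i ∉ S`, as
the dual of a finite set under the dot product. -/
def complementarityGens [DecidableEq ι] (H : Matrix ι ι ℝ) (S : Finset ι) : Set (ι → ℝ) :=
  ⋃ i, {Pi.single i 1, H i, if i ∈ S then -Pi.single i 1 else -H i}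

lemma mem_dual_complementarityGens [DecidableEq ι] {S : Finset ι} {t : ι → ℝ} :
    t ∈ PointedCone.dual (dotProductBilin ℝ ℝ) (complementarityGens H S) ↔
      ∀ i, 0 ≤ t i ∧ 0 ≤ (H *ᵥ t) i ∧ (if i ∈ S then t i ≤ 0 else (H *ᵥ t) i ≤ 0) := by
  simp only [complementarityGens, PointedCone.mem_dual, mem_iUnion, mem_insert_iff,
    mem_singleton_iff, forall_exists_index]
  rw [forall_comm]
  refine forall_congr' fun i => ?_
  simp only [forall_eq_or_imp, forall_eq, dotProductBilin_apply_apply, single_one_dotProduct]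
  split_ifs <;> simp [mulVec, neg_dotProduct]

lemma zeroSet_eq_iUnion [DecidableEq ι] (hc : H.Copositive) (hH : H.IsSymm) :
    {t : ι → ℝ | 0 ≤ t ∧ t ⬝ᵥ H *ᵥ t = 0} =
      ⋃ S : Finset ι, (PointedCone.dual (dotProductBilin ℝ ℝ) (complementarityGens H S) :
        Set (ι → ℝ)) := by
  ext t
  simp only [mem_ofPred_eq, mem_iUnion, SetLike.mem_coe, mem_dual_complementarityGens]
  constructor
  · rintro ⟨ht, hz⟩
    obtain ⟨hHt, hcompl⟩ := (hc.dotProduct_mulVec_eq_zero_iff hH ht).1 hz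
    refine ⟨Finset.univ.filter (t · = 0), fun i => ⟨ht i, hHt i, ?_⟩⟩
    split_ifs with hi
    · exact (Finset.mem_filter.1 hi).2.le
    · exact ((hcompl i).resolve_left (by simpa using hi)).le
  · rintro ⟨S, h⟩
    have ht : 0 ≤ t := fun i => (h i).1
    refine ⟨ht, (hc.dotProduct_mulVec_eq_zero_iff hH ht).2 ⟨fun i => (h i).2.1, fun i => ?_⟩⟩
    obtain ⟨h1, h2, h3⟩ := h i
    split_ifs at h3
    · exact .inl (le_antisymm h3 h1)
    · exact .inr (le_antisymm h3 h2)

lemma dualFG_dual_zeroSet (hc : H.Copositive) (hH : H.IsSymm) :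
    (PointedCone.dual (dotProductBilin ℝ ℝ) {t : ι → ℝ | 0 ≤ t ∧ t ⬝ᵥ H *ᵥ t = 0}).DualFG
      (dotProductBilin ℝ ℝ) := by
  classical
  rw [hc.zeroSet_eq_iUnion hH]
  refine PointedCone.DualFG.dual_iUnion_of_fg _ fun S =>
    (PointedCone.DualFG.dual_of_finite _ ?_).fg
  exact finite_iUnion fun i => toFinite _

end Copositive

end Matrix

theorem domain_of_quadratic_inf_on_polyhedral_cone {n : ℕ}
    (D : Set (Fin n → ℝ)) (hD : IsPolyhedralCone D)
    (G : Matrix (Fin n) (Fin n) ℝ) (hG : G.IsSymm)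
    (hpos : ∀ x ∈ D, 0 ≤ x ⬝ᵥ G.mulVec x) :
    {c : Fin n → ℝ |
        BddBelow ((fun x => c ⬝ᵥ x + (1 / 2) * (x ⬝ᵥ G.mulVec x)) '' D)} =
      {c : Fin n → ℝ | ∀ x ∈ D, x ⬝ᵥ G.mulVec x = 0 → 0 ≤ c ⬝ᵥ x} ∧
    IsPolyhedralCone
      {c : Fin n → ℝ |
        BddBelow ((fun x => c ⬝ᵥ x + (1 / 2) * (x ⬝ᵥ G.mulVec x)) '' D)} := by
  obtain ⟨m, V, rfl⟩ := hD.exists_eq_image_mulVec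
  set H := Vᵀ * G * V
  have hquad (t : Fin m → ℝ) : (V *ᵥ t) ⬝ᵥ G *ᵥ (V *ᵥ t) = t ⬝ᵥ H *ᵥ t := by
    simp only [H, ← mulVec_mulVec, dotProduct_mulVec _ Vᵀ, vecMul_transpose]
  have hlin (c : Fin n → ℝ) (t : Fin m → ℝ) : c ⬝ᵥ V *ᵥ t = (Vᵀ *ᵥ c) ⬝ᵥ t := by
    rw [dotProduct_mulVec, mulVec_transpose]
  have hc : H.Copositive := fun t ht => hquad t ▸ hpos _ ⟨t, ht, rfl⟩
  have hH : H.IsSymm := by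
    simp only [H, IsSymm, transpose_mul, transpose_transpose, hG.eq, Matrix.mul_assoc]
  have hdom : {c : Fin n → ℝ |
      BddBelow ((fun x => c ⬝ᵥ x + (1 / 2) * (x ⬝ᵥ G.mulVec x)) '' ((V *ᵥ ·) '' Ici 0))} =
      {c | ∀ t, 0 ≤ t → t ⬝ᵥ H *ᵥ t = 0 → 0 ≤ (Vᵀ *ᵥ c) ⬝ᵥ t} := by
    ext c
    simp only [mem_ofPred_eq, image_image, hquad, hlin]
    exact hc.bddBelow_quadratic_iff hH _
  refine ⟨hdom.trans ?_, ?_⟩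
  · ext c
    simp only [mem_ofPred_eq, forall_mem_image, mem_Ici, hquad, hlin]
  · rw [hdom, isPolyhedralCone_iff_fg]
    refine ⟨_, ((hc.dualFG_dual_zeroSet hH).comap Vᵀ.mulVecLin).fg, ?_⟩
    ext c
    simp [dotProduct_comm, mulVec_transpose]
end
end

section
/- Let F = K + D with K compact and D a polyhedral closed convex cone in ℝⁿ, and let L be a linear subspace with (K+D) ∩ L ≠ ∅. Then there exists a compact set K₀ such that (K + D) ∩ L = K₀ + (D ∩ L). -/
open Pointwise

noncomputable section

/-!
Write `D = φ(ℝᵐ₊)` with `φ c = ∑ cᵢ vᵢ`, and `L = ker π` with `π` the orthogonal projection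
onto `Lᗮ`. A point `k + φ c` of `L` has `‖π (φ c)‖ = ‖π k‖`
bounded on `K`. Peeling off conformal kernel directions of `A = π ∘ φ` (by induction on the
support of `c`) splits `c = c₀ + r` with `c₀, r ≥ 0`, `A r = 0` and `‖c₀‖ ≤ C ‖A c‖`, where `C`
is a uniform inverse bound of `A` on the finitely many coordinate subspaces where it is
injective. Then `k + φ c₀` ranges over a compact set and `φ r ∈ D ∩ L`.
-/

open Function NNReal

section Bounds

variable {E G : Type*} [NormedAddCommGroup E] [NormedSpace ℝ E] [FiniteDimensional ℝ E]
  [NormedAddCommGroup G] [NormedSpace ℝ G]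

theorem LinearMap.exists_norm_le_mul_norm_of_disjoint_ker (A : E →ₗ[ℝ] G) {V : Submodule ℝ E}
    (hV : Disjoint V (LinearMap.ker A)) : ∃ C : ℝ≥0, ∀ x ∈ V, ‖x‖ ≤ C * ‖A x‖ := by
  have hker : LinearMap.ker (A ∘ₗ V.subtype) = ⊥ := by
    rw [LinearMap.ker_comp, ← Submodule.disjoint_iff_comap_eq_bot]
    exact hV
  obtain ⟨C, -, hC⟩ := (A ∘ₗ V.subtype).exists_antilipschitzWith hker
  exact ⟨C, fun x hx => hC.le_mul_norm (map_zero _) ⟨x, hx⟩⟩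

theorem LinearMap.exists_uniform_norm_le_mul_norm_of_disjoint_ker {κ : Type*} [Finite κ]
    (A : E →ₗ[ℝ] G) (V : κ → Submodule ℝ E) :
    ∃ C : ℝ≥0, ∀ k, Disjoint (V k) (LinearMap.ker A) → ∀ x ∈ V k, ‖x‖ ≤ C * ‖A x‖ := by
  have h k : ∃ C : ℝ≥0, Disjoint (V k) (LinearMap.ker A) → ∀ x ∈ V k, ‖x‖ ≤ C * ‖A x‖ := by
    by_cases hk : Disjoint (V k) (LinearMap.ker A)
    · obtain ⟨C, hC⟩ := A.exists_norm_le_mul_norm_of_disjoint_ker hk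
      exact ⟨C, fun _ => hC⟩
    · exact ⟨0, fun h => absurd h hk⟩
  choose C hC using h
  obtain ⟨M, hM⟩ := Finite.exists_le C
  refine ⟨M, fun k hk x hx => (hC k hk x hx).trans ?_⟩
  gcongr
  exact hM k

end Bounds

theorem exists_pos_nonneg_sub_smul_support_ssubset {ι : Type*} [Fintype ι] {c μ : ι → ℝ}
    (hc : 0 ≤ c) (hμ : support μ ⊆ support c) (hpos : ∃ i, 0 < μ i) :
    ∃ t : ℝ, 0 < t ∧ 0 ≤ c - t • μ ∧ support (c - t • μ) ⊂ support c := by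
  classical
  obtain ⟨i₀, hi₀, hmin⟩ := Finset.exists_min_image {i | 0 < μ i} (fun i => c i / μ i)
    (by simpa [Finset.Nonempty] using hpos)
  replace hi₀ : 0 < μ i₀ := by simpa using hi₀
  have hci₀ : 0 < c i₀ := (hc i₀).lt_of_ne' (hμ hi₀.ne')
  -- the ratio test: the largest step keeping `c - t • μ ≥ 0`; it zeroes the coordinate `i₀`
  refine ⟨c i₀ / μ i₀, by positivity, fun i => ?_, ?_⟩
  · rcases lt_or_ge 0 (μ i) with hμi | hμi
    · have := hmin i (by simpa using hμi)
      rw [le_div_iff₀ hμi] at this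
      simpa using this
    · have : c i₀ / μ i₀ * μ i ≤ 0 := mul_nonpos_of_nonneg_of_nonpos (by positivity) hμi
      simpa using this.trans (hc i)
  · refine ⟨fun i hi => ?_, fun hsub => ?_⟩
    · by_contra hci
      simp_all [notMem_support.1 (mt (@hμ i) hci)]
    · have := hsub hci₀.ne'
      simp [field] at this

section KerSplit

variable {ι G : Type*} [Fintype ι] [NormedAddCommGroup G] [NormedSpace ℝ G]
  (A : (ι → ℝ) →ₗ[ℝ] G)

theorem LinearMap.exists_norm_le_mul_norm_of_injOn_support :
    ∃ C : ℝ≥0, ∀ c : ι → ℝ, (∀ μ, support μ ⊆ support c → A μ = 0 → μ = 0) →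
      ‖c‖ ≤ C * ‖A c‖ := by
  obtain ⟨C, hC⟩ := A.exists_uniform_norm_le_mul_norm_of_disjoint_ker
    fun s : Set ι => Submodule.pi sᶜ fun _ => (⊥ : Submodule ℝ ℝ)
  have hmem {s : Set ι} {μ : ι → ℝ} :
      μ ∈ Submodule.pi sᶜ (fun _ => (⊥ : Submodule ℝ ℝ)) ↔ support μ ⊆ s := by
    simp only [Submodule.mem_pi, Set.mem_compl_iff, Submodule.mem_bot, support_subset_iff']
  refine ⟨C, fun c hc => hC (support c) ?_ c (hmem.2 subset_rfl)⟩
  rw [Submodule.disjoint_def]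
  exact fun μ hμ hμA => hc μ (hmem.1 hμ) hμA

def IsKerSplit (C : ℝ) (c r : ι → ℝ) : Prop :=
  0 ≤ r ∧ r ≤ c ∧ A r = 0 ∧ ‖c - r‖ ≤ C * ‖A c‖

variable {A} {C : ℝ} {c c' r r' : ι → ℝ}

theorem IsKerSplit.add {ν : ι → ℝ} (h : IsKerSplit A C c r) (hν : 0 ≤ ν) (hAν : A ν = 0) :
    IsKerSplit A C (c + ν) (r + ν) := by
  obtain ⟨hr, hrc, hAr, hnorm⟩ := h
  refine ⟨add_nonneg hr hν, add_le_add_left hrc ν, by simp [hAr, hAν], ?_⟩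
  simpa [hAν] using hnorm

theorem IsKerSplit.convex_comb (h : IsKerSplit A C c r) (h' : IsKerSplit A C c' r')
    (hA : A c = A c') {a b : ℝ} (ha : 0 ≤ a) (hb : 0 ≤ b) (hab : a + b = 1) :
    IsKerSplit A C (a • c + b • c') (a • r + b • r') := by
  obtain ⟨hr, hrc, hAr, hnorm⟩ := h
  obtain ⟨hr', hrc', hAr', hnorm'⟩ := h'
  refine ⟨by positivity, ?_, by simp [hAr, hAr'], ?_⟩
  · gcongr
  · have hAc : A (a • c + b • c') = A c := by
      rw [map_add, map_smul, map_smul, ← hA, ← add_smul, hab, one_smul]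
    calc ‖a • c + b • c' - (a • r + b • r')‖ = ‖a • (c - r) + b • (c' - r')‖ := by
          congr 1; module
      _ ≤ a * ‖c - r‖ + b * ‖c' - r'‖ := by
          grw [norm_add_le, norm_smul, norm_smul, Real.norm_of_nonneg ha, Real.norm_of_nonneg hb]
      _ ≤ a * (C * ‖A c‖) + b * (C * ‖A c'‖) := by gcongr
      _ = C * ‖A (a • c + b • c')‖ := by rw [hAc, ← hA]; linear_combination C * ‖A c‖ * hab

variable (A) in
theorem LinearMap.exists_isKerSplit :
    ∃ C : ℝ≥0, ∀ c : ι → ℝ, 0 ≤ c → ∃ r, IsKerSplit A C c r := by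
  obtain ⟨C, hC⟩ := A.exists_norm_le_mul_norm_of_injOn_support
  refine ⟨C, fun c hc => ?_⟩
  induction hs : support c using WellFoundedLT.induction generalizing c with
  | ind s ih =>
    subst hs
    by_cases hinj : ∀ μ, support μ ⊆ support c → A μ = 0 → μ = 0
    · exact ⟨0, le_rfl, hc, map_zero A, by simpa using hC c hinj⟩
    push Not at hinj
    obtain ⟨μ, hμc, hAμ, hμ⟩ := hinj
    wlog hpos : ∃ i, 0 < μ i generalizing μ
    · refine this (-μ) (by simpa using hμc) (by simp [hAμ]) (neg_ne_zero.2 hμ) ?_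
      push Not at hpos
      obtain ⟨i, hi⟩ := Function.ne_iff.1 hμ
      exact ⟨i, by simpa using (hpos i).lt_of_ne hi⟩
    obtain ⟨t, ht, hct, hsuppt⟩ := exists_pos_nonneg_sub_smul_support_ssubset hc hμc hpos
    obtain ⟨r₁, hr₁⟩ := ih _ hsuppt (c - t • μ) hct rfl
    have hA₁ : A (c - t • μ) = A c := by simp [hAμ]
    by_cases hneg : ∃ i, μ i < 0
    · obtain ⟨i, hi⟩ := hneg
      obtain ⟨s, hs, hcs, hsupps⟩ := exists_pos_nonneg_sub_smul_support_ssubset (μ := -μ) hc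
        (by simpa using hμc) ⟨i, by simpa using hi⟩
      obtain ⟨r₂, hr₂⟩ := ih _ hsupps (c - s • -μ) hcs rfl
      have hA₂ : A (c - s • -μ) = A c := by simp [hAμ]
      -- `c` is a convex combination of `c - t • μ` and `c + s • μ`, both of smaller support
      have := hr₁.convex_comb hr₂ (hA₁.trans hA₂.symm) (a := s / (t + s)) (b := t / (t + s))
        (by positivity) (by positivity) (by field_simp; ring)
      have hc_eq : (s / (t + s)) • (c - t • μ) + (t / (t + s)) • (c - s • -μ) = c := by
        match_scalars <;> field_simp <;> ring
      exact ⟨_, hc_eq ▸ this⟩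
    · push Not at hneg
      have := hr₁.add (smul_nonneg ht.le hneg) (by simp [hAμ])
      exact ⟨_, sub_add_cancel c (t • μ) ▸ this⟩

end KerSplit

theorem exists_isCompact_add_image_Ici_inter_ker {ι E F : Type*} [Fintype ι]
    [NormedAddCommGroup E] [NormedSpace ℝ E] [NormedAddCommGroup F] [NormedSpace ℝ F]
    (φ : (ι → ℝ) →ₗ[ℝ] E) (π : E →L[ℝ] F) {K : Set E} (hK : IsCompact K) :
    ∃ K₀ : Set E, IsCompact K₀ ∧
      (K + φ '' Set.Ici 0) ∩ π.ker = K₀ + (φ '' Set.Ici 0 ∩ π.ker) := by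
  obtain ⟨C, hC⟩ := (π.toLinearMap ∘ₗ φ).exists_isKerSplit
  obtain ⟨M, hM⟩ := (hK.image π.continuous).isBounded.exists_norm_le
  let B : Set (ι → ℝ) := Set.Ici 0 ∩ Metric.closedBall 0 (C * M)
  have hB : IsCompact B := (isCompact_closedBall _ _).inter_left isClosed_Ici
  refine ⟨(K + φ '' B) ∩ π.ker,
    (hK.add (hB.image φ.continuous_of_finiteDimensional)).inter_right π.isClosed_ker, ?_⟩
  apply Set.Subset.antisymm
  · rintro _ ⟨⟨k, hk, _, ⟨c, hc, rfl⟩, rfl⟩, hx⟩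
    obtain ⟨r, hr, hrc, hAr, hnorm⟩ := hC c hc
    have hπk : π k = -π (φ c) := by
      simpa [eq_neg_iff_add_eq_zero] using hx
    have hcr : c - r ∈ B := by
      refine ⟨sub_nonneg.2 hrc, ?_⟩
      rw [mem_closedBall_zero_iff]
      have hAc : ‖π (φ c)‖ ≤ M := by simpa [hπk] using hM _ ⟨k, hk, rfl⟩
      exact hnorm.trans (by gcongr; exact hAc)
    refine ⟨k + φ (c - r), ⟨Set.add_mem_add hk ⟨_, hcr, rfl⟩, ?_⟩, φ r, ⟨⟨r, hr, rfl⟩, hAr⟩, ?_⟩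
    · simp [hπk, show π (φ r) = 0 from hAr]
    · simp [add_assoc]
  · rintro _ ⟨_, ⟨⟨k, hk, _, ⟨b, hb, rfl⟩, rfl⟩, hbL⟩, _, ⟨⟨d, hd, rfl⟩, hdL⟩, rfl⟩
    refine ⟨⟨k, hk, φ (b + d), ⟨b + d, Set.mem_Ici.2 (add_nonneg hb.1 hd), rfl⟩,
      by simp [add_assoc]⟩, π.ker.add_mem hbL hdL⟩

theorem motzkin_intersection_subspace_general {n : ℕ}
    (K D : Set (EuclideanSpace ℝ (Fin n)))
    (hK : IsCompact K) (hD : IsPolyhedralCone D)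
    (L : Submodule ℝ (EuclideanSpace ℝ (Fin n))) :
    ∃ K₀ : Set (EuclideanSpace ℝ (Fin n)), IsCompact K₀ ∧
      (K + D) ∩ (L : Set (EuclideanSpace ℝ (Fin n))) =
        K₀ + (D ∩ (L : Set (EuclideanSpace ℝ (Fin n)))) := by
  obtain ⟨m, v, rfl⟩ := hD
  have hD : {x | ∃ c : Fin m → ℝ, (∀ i, 0 ≤ c i) ∧ x = ∑ i, c i • v i} =
      Fintype.linearCombination ℝ v '' Set.Ici 0 := by
    ext x
    simp [Fintype.linearCombination_apply, eq_comm, Pi.le_def]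
  have hL : (L : Set (EuclideanSpace ℝ (Fin n))) = Lᗮ.starProjection.ker := by simp
  rw [hD, hL]
  exact exists_isCompact_add_image_Ici_inter_ker _ _ hK

theorem motzkin_intersection_subspace {n : ℕ}
    (K D : Set (EuclideanSpace ℝ (Fin n)))
    (hK : IsCompact K) (hD : IsPolyhedralCone D)
    (L : Submodule ℝ (EuclideanSpace ℝ (Fin n)))
    (hne : ((K + D) ∩ (L : Set (EuclideanSpace ℝ (Fin n)))).Nonempty) :
    ∃ K₀ : Set (EuclideanSpace ℝ (Fin n)), IsCompact K₀ ∧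
      (K + D) ∩ (L : Set (EuclideanSpace ℝ (Fin n))) =
        K₀ + (D ∩ (L : Set (EuclideanSpace ℝ (Fin n)))) :=
  motzkin_intersection_subspace_general K D hK hD L
end
end
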